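/- arXiv:1311.3866 — 10 statements merged into one kernel-verified Lean document; each statement's English description precedes it below -/
import Mathlib

section
/- The composition of two Zakrzewski morphisms of groupoids (as relations) is again a Zakrzewski morphism; hence groupoids with Zakrzewski morphisms form a category. -/
/-- A groupoid on a carrier type `Γ`, with total (junk-valued off composable
pairs) multiplication, source `d`, target `r`, inverse `inv` and unit set `E`. -/
structure Gpd (Γ : Type*) where
  d : Γ → Γ
  r : Γ → Γ
  inv : Γ → Γ
  mul : Γ → Γ → Γ
  E : Set Γ
  d_mem : ∀ γ, d γ ∈ E
  r_mem : ∀ γ, r γ ∈ E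
  d_unit : ∀ e ∈ E, d e = e
  r_unit : ∀ e ∈ E, r e = e
  mul_d : ∀ {γ₁ γ₂}, d γ₁ = r γ₂ → d (mul γ₁ γ₂) = d γ₂
  mul_r : ∀ {γ₁ γ₂}, d γ₁ = r γ₂ → r (mul γ₁ γ₂) = r γ₁
  mul_assoc : ∀ {a b c}, d a = r b → d b = r c → mul (mul a b) c = mul a (mul b c)
  unit_mul : ∀ γ, mul (r γ) γ = γ
  mul_unit : ∀ γ, mul γ (d γ) = γ
  inv_inv : ∀ γ, inv (inv γ) = γ
  d_inv : ∀ γ, d (inv γ) = r γ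
  r_inv : ∀ γ, r (inv γ) = d γ
  mul_inv : ∀ γ, mul γ (inv γ) = r γ
  inv_mul : ∀ γ, mul (inv γ) γ = d γ

/-- Composition of relations: a relation `X ⇀ Y` is a `Y → X → Prop`. -/
def RelComp {X Y Z : Type*} (s : Z → Y → Prop) (r : Y → X → Prop) : Z → X → Prop :=
  fun z x => ∃ y, s z y ∧ r y x

/-- Cartesian product of relations. -/
def RelProd {X Y X' Y' : Type*} (h : Y → X → Prop) (h' : Y' → X' → Prop) :
    Y × Y' → X × X' → Prop :=
  fun p q => h p.1 q.1 ∧ h' p.2 q.2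

/-- The multiplication relation `m : Γ × Γ ⇀ Γ` of a groupoid. -/
def mRel {Γ : Type*} (G : Gpd Γ) : Γ → Γ × Γ → Prop :=
  fun c p => G.d p.1 = G.r p.2 ∧ c = G.mul p.1 p.2

/-- The inverse relation `s : Γ ⇀ Γ` of a groupoid. -/
def sRel {Γ : Type*} (G : Gpd Γ) : Γ → Γ → Prop := fun a b => a = G.inv b

/-- The unit relation `e : {1} ⇀ Γ` of a groupoid. -/
def eRel {Γ : Type*} (G : Gpd Γ) : Γ → Unit → Prop := fun a _ => a ∈ G.E

/-- A Zakrzewski morphism `h : Γ ⇀ Δ` is a relation (a subset of `Δ × Γ`) with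
`h∘m = m₁∘(h×h)`, `h∘s = s₁∘h`, `h∘e = e₁`. -/
def IsZMorphism {Γ Δ : Type*} (G : Gpd Γ) (D : Gpd Δ) (h : Δ → Γ → Prop) : Prop :=
  RelComp h (mRel G) = RelComp (mRel D) (RelProd h h) ∧
  RelComp h (sRel G) = RelComp (sRel D) h ∧
  RelComp h (eRel G) = eRel D

/-- A subgroupoid: closed under inverse and composition. -/
def IsSubgroupoid {Γ : Type*} (G : Gpd Γ) (A : Set Γ) : Prop :=
  (∀ g ∈ A, G.inv g ∈ A) ∧
  (∀ g₁ g₂, g₁ ∈ A → g₂ ∈ A → G.d g₁ = G.r g₂ → G.mul g₁ g₂ ∈ A)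

/-- Transitivity: any two units are connected by an arrow. -/
def IsTransitiveGpd {Γ : Type*} (G : Gpd Γ) : Prop :=
  ∀ e₁ ∈ G.E, ∀ e₂ ∈ G.E, ∃ γ, G.r γ = e₁ ∧ G.d γ = e₂

/-- The orbit relation on units. -/
def OrbitRel {Γ : Type*} (G : Gpd Γ) (e₁ e₂ : Γ) : Prop :=
  ∃ γ, G.r γ = e₁ ∧ G.d γ = e₂

/-- Setwise product of subsets of a groupoid. -/
def setMul {Γ : Type*} (G : Gpd Γ) (A B : Set Γ) : Set Γ :=
  {c | ∃ a ∈ A, ∃ b ∈ B, G.d a = G.r b ∧ c = G.mul a b}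

/-- Setwise inverse. -/
def setInv {Γ : Type*} (G : Gpd Γ) (A : Set Γ) : Set Γ := G.inv '' A

/-- A bisection: a subset on which both source and target restrict to
bijections onto the unit set. -/
def IsBisection {Γ : Type*} (G : Gpd Γ) (B : Set Γ) : Prop :=
  Set.BijOn G.d B G.E ∧ Set.BijOn G.r B G.E

/-- Image of a set under a relation `h : Γ ⇀ Δ`. -/
def relImage {Γ Δ : Type*} (h : Δ → Γ → Prop) (A : Set Γ) : Set Δ :=
  {δ | ∃ γ ∈ A, h δ γ}

/-- Kernel of a Zakrzewski morphism. -/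
def kerSet {Γ Δ : Type*} (D : Gpd Δ) (h : Δ → Γ → Prop) : Set Γ :=
  {γ | (∃ δ, h δ γ) ∧ ∀ δ, h δ γ → δ ∈ D.E}

/-- A functor between groupoids (preserving composability). -/
def IsFunctor {Γ Δ : Type*} (G : Gpd Γ) (D : Gpd Δ) (Φ : Γ → Δ) : Prop :=
  (∀ e ∈ G.E, Φ e ∈ D.E) ∧
  (∀ γ, Φ (G.inv γ) = D.inv (Φ γ)) ∧
  (∀ γ₁ γ₂, G.d γ₁ = G.r γ₂ →
    D.d (Φ γ₁) = D.r (Φ γ₂) ∧ Φ (G.mul γ₁ γ₂) = D.mul (Φ γ₁) (Φ γ₂))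

/-- The pair groupoid on a set `X`. -/
def pairGpd (X : Type*) : Gpd (X × X) where
  d p := (p.2, p.2)
  r p := (p.1, p.1)
  inv p := (p.2, p.1)
  mul p q := (p.1, q.2)
  E := {p | p.1 = p.2}
  d_mem _ := rfl
  r_mem _ := rfl
  d_unit e he := by obtain ⟨a, b⟩ := e; simp_all [Set.mem_setOf_eq]
  r_unit e he := by obtain ⟨a, b⟩ := e; simp_all [Set.mem_setOf_eq]
  mul_d _ := rfl
  mul_r _ := rfl
  mul_assoc _ _ := rfl
  unit_mul _ := rfl
  mul_unit _ := rfl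
  inv_inv _ := rfl
  d_inv _ := rfl
  r_inv _ := rfl
  mul_inv _ := rfl
  inv_mul _ := rfl

/-- A group viewed as a groupoid with a single unit. -/
def groupGpd (G : Type*) [Group G] : Gpd G where
  d _ := 1
  r _ := 1
  inv g := g⁻¹
  mul g h := g * h
  E := {1}
  d_unit _ he := he.symm
  r_unit _ he := he.symm
  d_mem _ := rfl
  r_mem _ := rfl
  mul_d _ := rfl
  mul_r _ := rfl
  mul_assoc _ _ := mul_assoc _ _ _
  unit_mul := one_mul
  mul_unit := mul_one
  inv_inv := inv_inv
  d_inv _ := rfl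
  r_inv _ := rfl
  mul_inv := mul_inv_cancel
  inv_mul := inv_mul_cancel

/-- The product groupoid `E × G × E` of a group and a pair groupoid. -/
def prodGpd (E G : Type*) [Group G] : Gpd (E × G × E) where
  d p := (p.2.2, 1, p.2.2)
  r p := (p.1, 1, p.1)
  inv p := (p.2.2, p.2.1⁻¹, p.1)
  mul p q := (p.1, p.2.1 * q.2.1, q.2.2)
  E := {p | p.1 = p.2.2 ∧ p.2.1 = 1}
  d_mem _ := ⟨rfl, rfl⟩
  r_mem _ := ⟨rfl, rfl⟩
  d_unit e he := by obtain ⟨a, g, b⟩ := e; obtain ⟨h1, h2⟩ := he; simp_all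
  r_unit e he := by obtain ⟨a, g, b⟩ := e; obtain ⟨h1, h2⟩ := he; simp_all
  mul_d _ := rfl
  mul_r _ := rfl
  mul_assoc _ _ := by simp [mul_assoc]
  unit_mul γ := by simp
  mul_unit γ := by simp
  inv_inv γ := by simp
  d_inv _ := rfl
  r_inv _ := rfl
  mul_inv γ := by simp
  inv_mul γ := by simp

theorem relComp_assoc {X Y Z W : Type*} (t : W → Z → Prop) (s : Z → Y → Prop)
    (r : Y → X → Prop) : RelComp (RelComp t s) r = RelComp t (RelComp s r) := by
  funext w x
  simp only [RelComp, eq_iff_iff]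
  constructor
  · rintro ⟨y, ⟨z, htz, hsy⟩, hr⟩; exact ⟨z, htz, y, hsy, hr⟩
  · rintro ⟨z, htz, y, hsy, hr⟩; exact ⟨y, ⟨z, htz, hsy⟩, hr⟩

theorem relProd_comp {X Y Z X' Y' Z' : Type*} (s : Z → Y → Prop) (r : Y → X → Prop)
    (s' : Z' → Y' → Prop) (r' : Y' → X' → Prop) :
    RelProd (RelComp s r) (RelComp s' r') = RelComp (RelProd s s') (RelProd r r') := by
  funext p q
  simp only [RelProd, RelComp, eq_iff_iff]
  constructor
  · rintro ⟨⟨y, hs, hr⟩, ⟨y', hs', hr'⟩⟩; exact ⟨(y, y'), ⟨hs, hs'⟩, hr, hr'⟩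
  · rintro ⟨⟨y, y'⟩, ⟨hs, hs'⟩, hr, hr'⟩; exact ⟨⟨y, hs, hr⟩, ⟨y', hs', hr'⟩⟩

/-- The composition (as relations) of two Zakrzewski morphisms of groupoids is
again a Zakrzewski morphism; hence groupoids with Zakrzewski morphisms form a
category. -/
theorem stmt_2 {Γ₁ Γ₂ Γ₃ : Type*} (G₁ : Gpd Γ₁) (G₂ : Gpd Γ₂) (G₃ : Gpd Γ₃)
    (h : Γ₂ → Γ₁ → Prop) (k : Γ₃ → Γ₂ → Prop)
    (hh : IsZMorphism G₁ G₂ h) (hk : IsZMorphism G₂ G₃ k) :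
    IsZMorphism G₁ G₃ (RelComp k h) := by
  obtain ⟨hm, hs, he⟩ := hh
  obtain ⟨km, ks, ke⟩ := hk
  refine ⟨?_, ?_, ?_⟩
  · rw [relComp_assoc, hm, ← relComp_assoc, km, relComp_assoc, relProd_comp]
  · rw [relComp_assoc, hs, ← relComp_assoc, ks, relComp_assoc]
  · rw [relComp_assoc, he, ke]
end

section
/- A functor Φ : Γ → Δ between groupoids is a Zakrzewski morphism from Δ to Γ via its transpose (equivalently, Φ itself viewed as a relation Γ ⇀ Δ is a Zakrzewski morphism) if and only if the restriction of Φ to the unit space Γ^{(0)} is a bijection onto Δ^{(0)}. -/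
/-- A functor `Φ : Γ → Δ` between groupoids, viewed as a relation `Γ ⇀ Δ`
(i.e. the subset `{(Φ γ, γ)} ⊆ Δ × Γ`), is a Zakrzewski morphism if and only if
the restriction of `Φ` to the unit space is a bijection onto the unit space of
`Δ`. -/
theorem stmt_3 {Γ Δ : Type*} (G : Gpd Γ) (D : Gpd Δ) (Φ : Γ → Δ)
    (hΦ : IsFunctor G D Φ) :
    IsZMorphism G D (fun δ γ => δ = Φ γ) ↔ Set.BijOn Φ G.E D.E := by
  obtain ⟨hE, hinv, hmul⟩ := hΦ
  have hd : ∀ γ, Φ (G.d γ) = D.d (Φ γ) := by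
    intro γ
    have hc : G.d γ = G.r (G.d γ) := (G.r_unit _ (G.d_mem γ)).symm
    have := (hmul γ (G.d γ) hc).1
    rw [this, D.r_unit _ (hE _ (G.d_mem γ))]
  have hr : ∀ γ, Φ (G.r γ) = D.r (Φ γ) := by
    intro γ
    have hc : G.d (G.r γ) = G.r γ := G.d_unit _ (G.r_mem γ)
    have := (hmul (G.r γ) γ hc).1
    rw [← this, D.d_unit _ (hE _ (G.r_mem γ))]
  constructor
  · rintro ⟨h1, _, h3⟩
    refine ⟨hE, ?_, ?_⟩
    · intro e₁ he₁ e₂ he₂ heq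
      have hcomp : D.d (Φ e₁) = D.r (Φ e₂) := by
        rw [D.d_unit _ (hE _ he₁), D.r_unit _ (hE _ he₂), heq]
      have : RelComp (mRel D) (RelProd (fun δ γ => δ = Φ γ) (fun δ γ => δ = Φ γ))
          (D.mul (Φ e₁) (Φ e₂)) (e₁, e₂) :=
        ⟨(Φ e₁, Φ e₂), ⟨hcomp, rfl⟩, rfl, rfl⟩
      rw [← h1] at this
      obtain ⟨y, _, hy2, _⟩ := this
      rw [G.d_unit _ he₁, G.r_unit _ he₂] at hy2
      exact hy2
    · intro δ hδ
      have : eRel D δ () := hδ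
      rw [← h3] at this
      obtain ⟨y, hy1, hy2⟩ := this
      exact ⟨y, hy2, hy1.symm⟩
  · rintro ⟨_, hinj, hsurj⟩
    refine ⟨?_, ?_, ?_⟩
    · funext c p
      apply propext
      constructor
      · rintro ⟨y, hy1, hy2, hy3⟩
        obtain ⟨hcomp, heq⟩ := hmul p.1 p.2 hy2
        exact ⟨(Φ p.1, Φ p.2), ⟨hcomp, by rw [hy1, hy3, heq]⟩, rfl, rfl⟩
      · rintro ⟨q, ⟨hq1, hq2⟩, hq3, hq4⟩
        have hc : G.d p.1 = G.r p.2 := by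
          apply hinj (G.d_mem p.1) (G.r_mem p.2)
          rw [hd, hr, ← hq3, ← hq4]; exact hq1
        exact ⟨G.mul p.1 p.2, by rw [hq2, hq3, hq4]; exact ((hmul p.1 p.2 hc).2).symm, hc, rfl⟩
    · funext a b
      apply propext
      constructor
      · rintro ⟨y, hy1, hy2⟩
        exact ⟨Φ b, show a = D.inv (Φ b) by rw [hy1, show y = G.inv b from hy2, hinv], rfl⟩
      · rintro ⟨y, hy1, hy2⟩
        refine ⟨G.inv b, ?_, rfl⟩
        show a = Φ (G.inv b)
        rw [hinv, ← hy2]; exact hy1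
    · funext a u
      apply propext
      constructor
      · rintro ⟨y, hy1, hy2⟩
        exact hy1 ▸ hE _ hy2
      · intro ha
        obtain ⟨y, hy1, hy2⟩ := hsurj ha
        exact ⟨y, hy2.symm, hy1⟩
end

section
/- Let h : Γ ⇀ Δ be a Zakrzewski morphism of groupoids and G, G₁ ⊆ Γ subgroupoids with G ∩ G₁ = ∅. Then h(G) ∩ h(G₁) = ∅, where h(A) = {δ ∈ Δ : ∃γ ∈ A, (δ,γ) ∈ h}. -/
/-- A Zakrzewski morphism maps disjoint subgroupoids to disjoint sets. -/
theorem stmt_4 {Γ Δ : Type*} (G : Gpd Γ) (D : Gpd Δ) (h : Δ → Γ → Prop)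
    (hh : IsZMorphism G D h) (A A₁ : Set Γ)
    (hA : IsSubgroupoid G A) (hA₁ : IsSubgroupoid G A₁)
    (hdisj : A ∩ A₁ = ∅) :
    relImage h A ∩ relImage h A₁ = ∅ := by

  ext δ
  simp only [Set.mem_inter_iff, Set.mem_empty_iff_false, iff_false]
  rintro ⟨⟨γ, hγA, hδγ⟩, ⟨γ₁, hγ₁A, hδγ₁⟩⟩
  obtain ⟨hm, hs, -⟩ := hh
  -- from the s-axiom: h (D.inv δ) (G.inv γ)
  have hinv : h (D.inv δ) (G.inv γ) := by
    have : RelComp h (sRel G) δ (G.inv γ) := ⟨γ, hδγ, (G.inv_inv γ).symm⟩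
    rw [hs] at this
    obtain ⟨y, hy1, hy2⟩ := this
    have : y = D.inv δ := by rw [hy1, D.inv_inv]
    rwa [this] at hy2
  -- from the m-axiom with q = (D.inv δ, δ): composability on the Γ side
  have hcomp : RelComp (mRel D) (RelProd h h) (D.d δ) (G.inv γ, γ₁) :=
    ⟨(D.inv δ, δ), ⟨D.d_inv δ,
      (D.inv_mul δ).symm⟩, hinv, hδγ₁⟩
  rw [← hm] at hcomp
  obtain ⟨y, -, hdr, -⟩ := hcomp
  -- hdr : G.d (G.inv γ) = G.r γ₁, i.e. G.r γ = G.r γ₁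
  have hr : G.r γ = G.r γ₁ := by rw [← G.d_inv γ]; exact hdr
  -- r γ ∈ A and r γ₁ ∈ A₁
  have h1 : G.r γ ∈ A := by
    have := hA.2 γ (G.inv γ) hγA (hA.1 γ hγA) (G.r_inv γ).symm
    rwa [G.mul_inv] at this
  have h2 : G.r γ₁ ∈ A₁ := by
    have := hA₁.2 γ₁ (G.inv γ₁) hγ₁A (hA₁.1 γ₁ hγ₁A) (G.r_inv γ₁).symm
    rwa [G.mul_inv] at this
  have : G.r γ ∈ A ∩ A₁ := ⟨h1, hr ▸ h2⟩
  rw [hdisj] at this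
  exact this
end

section
/- Let h, k : Γ ⇀ Δ be Zakrzewski morphisms of groupoids, with Γ transitive. If for some unit e ∈ Γ^{(0)} the restrictions of h and k to the fiber d^{-1}(e) coincide (i.e., {(δ,γ) ∈ h : d(γ) = e} = {(δ,γ) ∈ k : d(γ) = e}), then h = k. -/
lemma zm_inv {Γ Δ : Type*} {G : Gpd Γ} {D : Gpd Δ} {h : Δ → Γ → Prop}
    (hh : IsZMorphism G D h) (δ : Δ) (γ : Γ) :
    h δ (G.inv γ) ↔ h (D.inv δ) γ := by
  obtain ⟨_, hs, _⟩ := hh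
  constructor
  · intro H
    have H1 : RelComp h (sRel G) δ γ := ⟨G.inv γ, H, rfl⟩
    rw [hs] at H1
    obtain ⟨b, hb1, hb2⟩ := H1
    rwa [hb1, D.inv_inv]
  · intro H
    have H1 : RelComp (sRel D) h δ γ := ⟨D.inv δ, (D.inv_inv δ).symm, H⟩
    rw [← hs] at H1
    obtain ⟨y, hy1, hy2⟩ := H1
    exact hy2 ▸ hy1

lemma zm_ext_aux {Γ Δ : Type*} {G : Gpd Γ} {D : Gpd Δ} {h k : Δ → Γ → Prop}
    (hh : IsZMorphism G D h) (hk : IsZMorphism G D k)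
    (htrans : IsTransitiveGpd G) {e : Γ} (he : e ∈ G.E)
    (hfib : ∀ δ γ, G.d γ = e → (h δ γ → k δ γ)) :
    ∀ δ γ, h δ γ → k δ γ := by
  intro δ γ H
  obtain ⟨τ, hτr, hτd⟩ := htrans (G.d γ) (G.d_mem γ) e he
  have hcomp1 : G.d γ = G.r τ := hτr.symm
  have hdγτ : G.d (G.mul γ τ) = e := by rw [G.mul_d hcomp1, hτd]
  have hcomp2 : G.d (G.mul γ τ) = G.r (G.inv τ) := by
    rw [G.mul_d hcomp1, G.r_inv]
  have hγeq : G.mul (G.mul γ τ) (G.inv τ) = γ := by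
    rw [G.mul_assoc hcomp1 (G.r_inv τ).symm, G.mul_inv, ← hcomp1, G.mul_unit]
  have H1 : RelComp h (mRel G) δ (G.mul γ τ, G.inv τ) :=
    ⟨γ, H, hcomp2, hγeq.symm⟩
  rw [hh.1] at H1
  obtain ⟨⟨δ₁, δ₂⟩, ⟨hδcomp, hδeq⟩, h1, h2⟩ := H1
  have k1 : k δ₁ (G.mul γ τ) := hfib δ₁ _ hdγτ h1
  have k2 : k δ₂ (G.inv τ) :=
    (zm_inv hk δ₂ τ).mpr (hfib (D.inv δ₂) τ hτd ((zm_inv hh δ₂ τ).mp h2))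
  have K1 : RelComp (mRel D) (RelProd k k) δ (G.mul γ τ, G.inv τ) :=
    ⟨(δ₁, δ₂), ⟨hδcomp, hδeq⟩, k1, k2⟩
  rw [← hk.1] at K1
  obtain ⟨c, kc, _, hc⟩ := K1
  rwa [hc, hγeq] at kc

/-- A Zakrzewski morphism out of a transitive groupoid is determined by its
restriction to a single source-fiber. -/
theorem stmt_5 {Γ Δ : Type*} (G : Gpd Γ) (D : Gpd Δ) (h k : Δ → Γ → Prop)
    (hh : IsZMorphism G D h) (hk : IsZMorphism G D k)
    (htrans : IsTransitiveGpd G) (e : Γ) (he : e ∈ G.E)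
    (hfib : ∀ δ γ, G.d γ = e → (h δ γ ↔ k δ γ)) :
    h = k := by
  funext δ γ
  exact propext
    ⟨zm_ext_aux hh hk htrans he (fun δ' γ' hd => (hfib δ' γ' hd).mp) δ γ,
     zm_ext_aux hk hh htrans he (fun δ' γ' hd => (hfib δ' γ' hd).mpr) δ γ⟩
end

section
/- For any groupoid Γ, the relation l : Γ ⇀ Γ² into the pair groupoid Γ × Γ defined by l = {((g,h), k) : g = kh, i.e., (g; k, h) ∈ m} is a Zakrzewski morphism (the left regular representation). -/
/-- The left regular representation `l : Γ ⇀ Γ²`,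
`l = {((g,h),k) : (g;k,h) ∈ m}`, is a Zakrzewski morphism into the pair
groupoid on `Γ`. -/
theorem stmt_6 {Γ : Type*} (G : Gpd Γ) :
    IsZMorphism G (pairGpd Γ)
      (fun p k => G.d k = G.r p.2 ∧ p.1 = G.mul k p.2) := by
  refine ⟨?_, ?_, ?_⟩
  · funext p q
    obtain ⟨g, h⟩ := p; obtain ⟨k₁, k₂⟩ := q
    apply propext
    simp only [RelComp, RelProd, mRel, pairGpd, Prod.mk.injEq]
    constructor
    · rintro ⟨c, ⟨hdc, hg⟩, hd12, rfl⟩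
      have hdk2 : G.d k₂ = G.r h := by rw [← G.mul_d hd12]; exact hdc
      refine ⟨((g, G.mul k₂ h), (G.mul k₂ h, h)), ⟨⟨rfl, rfl⟩, rfl, rfl⟩,
        ⟨?_, ?_⟩, hdk2, rfl⟩
      · rw [G.mul_r hdk2]; exact hd12
      · rw [hg, G.mul_assoc hd12 hdk2]
    · rintro ⟨⟨⟨a, b⟩, ⟨c, d⟩⟩, ⟨⟨hbc, -⟩, hga, hhd⟩, ⟨hk1, hak⟩, ⟨hk2, hck⟩⟩
      dsimp only at hbc hk1 hak hk2 hck
      subst hga; subst hhd; subst hbc; subst hak; subst hck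
      have hd12 : G.d k₁ = G.r k₂ := by rw [hk1, G.mul_r hk2]
      refine ⟨G.mul k₁ k₂, ⟨?_, ?_⟩, hd12, rfl⟩
      · rw [G.mul_d hd12]; exact hk2
      · rw [G.mul_assoc hd12 hk2]
  · funext p k
    obtain ⟨g, h⟩ := p
    apply propext
    simp only [RelComp, sRel, pairGpd, Prod.mk.injEq]
    constructor
    · rintro ⟨c, ⟨hdc, hg⟩, rfl⟩
      have hrk : G.r k = G.r h := by rw [← G.d_inv]; exact hdc
      refine ⟨(h, g), ⟨rfl, rfl⟩, ?_, ?_⟩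
      · show G.d k = G.r g
        rw [hg, G.mul_r hdc, G.r_inv]
      · show h = G.mul k g
        rw [hg, ← G.mul_assoc (G.r_inv k).symm hdc, G.mul_inv, hrk,
          G.unit_mul]
    · rintro ⟨⟨a, b⟩, ⟨hga, hhb⟩, hdk, hak⟩
      subst hga; subst hhb
      replace hdk : G.d k = G.r g := hdk
      replace hak : h = G.mul k g := hak
      refine ⟨G.inv k, ⟨?_, ?_⟩, rfl⟩
      · rw [G.d_inv, hak, G.mul_r hdk]
      · rw [hak, ← G.mul_assoc (G.d_inv k) hdk, G.inv_mul, hdk,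
          G.unit_mul]
  · funext p u
    obtain ⟨g, h⟩ := p
    apply propext
    simp only [RelComp, eRel, pairGpd, Set.mem_setOf_eq]
    constructor
    · rintro ⟨c, ⟨hdc, hg⟩, hcE⟩
      have hc : c = G.r h := by rw [← G.d_unit c hcE]; exact hdc
      rw [hg, hc, G.unit_mul]
    · intro hgh
      exact ⟨G.r h, ⟨G.d_unit _ (G.r_mem h), by rw [hgh, G.unit_mul]⟩,
        G.r_mem h⟩
end

section
/- Let X be a set and G a group. A relation h : G ⇀ X² into the pair groupoid X² is a Zakrzewski morphism if and only if there is a (left) action of G on X such that h = {((gx, x), g) : g ∈ G, x ∈ X}. -/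
/-- A relation `h : G ⇀ X²` from a group to a pair groupoid is a Zakrzewski
morphism if and only if it comes from a left action of `G` on `X`, i.e.
`h = {((g•x, x), g)}`. -/
theorem stmt_7 {G : Type*} [Group G] {X : Type*} (h : X × X → G → Prop) :
    IsZMorphism (groupGpd G) (pairGpd X) h ↔
      ∃ act : G → X → X,
        (∀ x, act 1 x = x) ∧
        (∀ g₁ g₂ x, act g₁ (act g₂ x) = act (g₁ * g₂) x) ∧
        (∀ p g, h p g ↔ p.1 = act g p.2) := by

  constructor
  · rintro ⟨hm, hs, he⟩
    have e1 : ∀ x y : X, h (x, y) 1 ↔ x = y := by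
      intro x y
      have := congrFun (congrFun he (x, y)) ()
      simpa [RelComp, eRel, groupGpd, pairGpd] using this
    have s1 : ∀ (x y : X) (g : G), h (x, y) g⁻¹ ↔ h (y, x) g := by
      intro x y g
      have := congrFun (congrFun hs (x, y)) g
      simp [RelComp, sRel, groupGpd, pairGpd] at this
      rw [this]
    have m1 : ∀ (x z : X) (g₁ g₂ : G),
        h (x, z) (g₁ * g₂) ↔ ∃ y, h (x, y) g₁ ∧ h (y, z) g₂ := by
      intro x z g₁ g₂
      have := congrFun (congrFun hm (x, z)) (g₁, g₂)
      simp [RelComp, mRel, RelProd, groupGpd, pairGpd, Prod.ext_iff] at this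
      rw [this]
    have uniq : ∀ (g : G) (x y y' : X), h (y, x) g → h (y', x) g → y = y' := by
      intro g x y y' h1 h2
      have h3 : h (x, y') g⁻¹ := (s1 x y' g).mpr h2
      have h4 : h (y, y') (g * g⁻¹) := (m1 y y' g g⁻¹).mpr ⟨x, h1, h3⟩
      rw [mul_inv_cancel] at h4
      exact (e1 _ _).mp h4
    have ex : ∀ (g : G) (x : X), ∃ y, h (y, x) g := by
      intro g x
      have h0 : h (x, x) (g⁻¹ * g) := by
        rw [inv_mul_cancel]; exact (e1 x x).mpr rfl
      obtain ⟨y, -, h2⟩ := (m1 x x g⁻¹ g).mp h0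
      exact ⟨y, h2⟩
    choose act hact using ex
    refine ⟨act, ?_, ?_, ?_⟩
    · intro x
      exact uniq 1 x (act 1 x) x (hact 1 x) ((e1 x x).mpr rfl)
    · intro g₁ g₂ x
      exact uniq (g₁ * g₂) x _ _
        ((m1 _ _ g₁ g₂).mpr ⟨act g₂ x, hact g₁ _, hact g₂ x⟩)
        (hact (g₁ * g₂) x)
    · rintro ⟨a, b⟩ g
      constructor
      · intro hp; exact uniq g b a (act g b) hp (hact g b)
      · intro hp; simp only at hp; rw [hp]; exact hact g b
  · rintro ⟨act, h1, h2, h3⟩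
    have hinv : ∀ (g : G) (x : X), act g⁻¹ (act g x) = x := by
      intro g x; rw [h2, inv_mul_cancel, h1]
    refine ⟨?_, ?_, ?_⟩
    · funext p q
      obtain ⟨x, z⟩ := p
      obtain ⟨g₁, g₂⟩ := q
      simp only [RelComp, mRel, RelProd, groupGpd, pairGpd, Prod.ext_iff, h3]
      apply propext
      constructor
      · rintro ⟨g, rfl, -, rfl⟩
        exact ⟨((act (g₁ * g₂) z, act g₂ z), (act g₂ z, z)),
          ⟨⟨rfl, rfl⟩, rfl, rfl⟩, (h2 g₁ g₂ z).symm, rfl⟩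
      · rintro ⟨⟨⟨a, b⟩, ⟨c, d⟩⟩, ⟨⟨hbc, -⟩, rfl, rfl⟩, ha, hc⟩
        simp only at hbc ha hc
        exact ⟨g₁ * g₂, by rw [ha, hbc, hc, h2], trivial, rfl⟩
    · funext p g
      obtain ⟨x, y⟩ := p
      simp only [RelComp, sRel, groupGpd, pairGpd, Prod.ext_iff, h3]
      apply propext
      constructor
      · rintro ⟨g', rfl, rfl⟩
        exact ⟨(y, act g⁻¹ y), ⟨rfl, rfl⟩, by rw [h2, mul_inv_cancel, h1]⟩
      · rintro ⟨⟨a, b⟩, ⟨rfl, rfl⟩, hab⟩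
        simp only at hab
        exact ⟨g⁻¹, by rw [hab, hinv], rfl⟩
    · funext p u
      obtain ⟨x, y⟩ := p
      simp only [RelComp, eRel, groupGpd, pairGpd, h3, Set.mem_setOf_eq,
        Set.mem_singleton_iff]
      simp [h1]
end

section
/- Let h : Γ ⇀ Δ be a Zakrzewski morphism. Its kernel ker(h) := {γ ∈ D(h) : ∀δ, (δ,γ) ∈ h ⟹ δ ∈ Δ^{(0)}} satisfies: (1) every γ ∈ ker(h) has d(γ) = r(γ); (2) γ ∈ ker(h) ⟹ γ^{-1} ∈ ker(h); (3) ker(h) is closed under composition; (4) if γ ∈ ker(h) and γ₁ is composable with γ, then γ₁γγ₁^{-1} ∈ ker(h). Thus ker(h) is a subgroupoid of the isotropy bundle whose intersection with each isotropy group it meets is a normal subgroup. -/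
/-- Properties of the kernel of a Zakrzewski morphism: its elements are
isotropy elements, it is closed under inverse and composition, and it is
invariant under conjugation; hence it is a subgroupoid of the isotropy bundle
meeting each isotropy group in a normal subgroup. -/
theorem stmt_12 {Γ Δ : Type*} (G : Gpd Γ) (D : Gpd Δ) (h : Δ → Γ → Prop)
    (hh : IsZMorphism G D h) :
    (∀ γ ∈ kerSet D h, G.d γ = G.r γ) ∧
    (∀ γ ∈ kerSet D h, G.inv γ ∈ kerSet D h) ∧
    (∀ γ₁ γ₂, γ₁ ∈ kerSet D h → γ₂ ∈ kerSet D h → G.d γ₁ = G.r γ₂ →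
      G.mul γ₁ γ₂ ∈ kerSet D h) ∧
    (∀ γ γ₁, γ ∈ kerSet D h → G.d γ₁ = G.r γ →
      G.mul (G.mul γ₁ γ) (G.inv γ₁) ∈ kerSet D h) := by
  obtain ⟨hm, hs, he⟩ := hh
  -- Forward direction of the multiplication axiom
  have fwd : ∀ δ γ₁ γ₂, G.d γ₁ = G.r γ₂ → h δ (G.mul γ₁ γ₂) →
      ∃ δ₁ δ₂, D.d δ₁ = D.r δ₂ ∧ δ = D.mul δ₁ δ₂ ∧ h δ₁ γ₁ ∧ h δ₂ γ₂ := by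
    intro δ γ₁ γ₂ hc hδ
    have H := congrFun (congrFun hm δ) (γ₁, γ₂)
    simp only [RelComp, mRel, RelProd] at H
    obtain ⟨⟨δ₁, δ₂⟩, ⟨hc', heq⟩, h1, h2⟩ := H.mp ⟨G.mul γ₁ γ₂, hδ, hc, rfl⟩
    exact ⟨δ₁, δ₂, hc', heq, h1, h2⟩
  -- Backward direction of the multiplication axiom
  have bwd : ∀ δ₁ δ₂ γ₁ γ₂, D.d δ₁ = D.r δ₂ → h δ₁ γ₁ → h δ₂ γ₂ →
      G.d γ₁ = G.r γ₂ ∧ h (D.mul δ₁ δ₂) (G.mul γ₁ γ₂) := by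
    intro δ₁ δ₂ γ₁ γ₂ hc h1 h2
    have H := congrFun (congrFun hm (D.mul δ₁ δ₂)) (γ₁, γ₂)
    simp only [RelComp, mRel, RelProd] at H
    obtain ⟨c, hc', hg, hcc⟩ := H.mpr ⟨(δ₁, δ₂), ⟨hc, rfl⟩, h1, h2⟩
    exact ⟨hg, hcc ▸ hc'⟩
  -- The inverse axiom
  have sinv : ∀ δ γ, h δ (G.inv γ) ↔ ∃ b, δ = D.inv b ∧ h b γ := by
    intro δ γ
    have H := congrFun (congrFun hs δ) γ
    simp only [RelComp, sRel] at H
    constructor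
    · intro hδ; exact H.mp ⟨G.inv γ, hδ, rfl⟩
    · intro hb
      obtain ⟨c, h1, h2⟩ := H.mpr hb
      exact h2 ▸ h1
  -- The unit axiom
  have eunit : ∀ δ, (∃ u, h δ u ∧ u ∈ G.E) → δ ∈ D.E := by
    intro δ hu
    have H := congrFun (congrFun he δ) ()
    simp only [RelComp, eRel] at H
    exact H.mp hu
  -- every δ related to a kernel element is also related to its source/range
  have factA : ∀ γ ∈ kerSet D h, ∀ δ, h δ γ → h δ (G.d γ) := by
    intro γ hγ δ hδ
    have hc : G.d γ = G.r (G.d γ) := (G.r_unit _ (G.d_mem γ)).symm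
    obtain ⟨δ₁, δ₂, hc', heq, h1, h2⟩ := fwd δ γ (G.d γ) hc ((G.mul_unit γ).symm ▸ hδ)
    have hδ₁ : δ₁ ∈ D.E := hγ.2 δ₁ h1
    have : δ₁ = D.r δ₂ := (D.d_unit δ₁ hδ₁).symm.trans hc'
    have : δ = δ₂ := by rw [heq, this, D.unit_mul]
    exact this ▸ h2
  have factB : ∀ γ ∈ kerSet D h, ∀ δ, h δ γ → h δ (G.r γ) := by
    intro γ hγ δ hδ
    have hc : G.d (G.r γ) = G.r γ := G.d_unit _ (G.r_mem γ)
    obtain ⟨δ₁, δ₂, hc', heq, h1, h2⟩ := fwd δ (G.r γ) γ hc ((G.unit_mul γ).symm ▸ hδ)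
    have hδ₂ : δ₂ ∈ D.E := hγ.2 δ₂ h2
    have : D.d δ₁ = δ₂ := hc'.trans (D.r_unit δ₂ hδ₂)
    have : δ = δ₁ := by rw [heq, ← this, D.mul_unit]
    exact this ▸ h1
  -- Claim 1: kernel elements are isotropy elements
  have claim1 : ∀ γ ∈ kerSet D h, G.d γ = G.r γ := by
    intro γ hγ
    obtain ⟨δ, hδ⟩ := hγ.1
    have hδE : δ ∈ D.E := hγ.2 δ hδ
    have hA := factA γ hγ δ hδ
    have hB := factB γ hγ δ hδ
    have hcomp : D.d δ = D.r δ := (D.d_unit δ hδE).trans (D.r_unit δ hδE).symm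
    have := (bwd δ δ (G.d γ) (G.r γ) hcomp hA hB).1
    rwa [G.d_unit _ (G.d_mem γ), G.r_unit _ (G.r_mem γ)] at this
  -- inverses of units are units
  have invE : ∀ e ∈ D.E, D.inv e = e := by
    intro e heE
    calc D.inv e = D.mul (D.r (D.inv e)) (D.inv e) := (D.unit_mul _).symm
      _ = D.mul e (D.inv e) := by rw [D.r_inv, D.d_unit e heE]
      _ = D.r e := D.mul_inv e
      _ = e := D.r_unit e heE
  -- Claim 2: closed under inverses
  have claim2 : ∀ γ ∈ kerSet D h, G.inv γ ∈ kerSet D h := by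
    intro γ hγ
    obtain ⟨δ, hδ⟩ := hγ.1
    refine ⟨⟨D.inv δ, (sinv (D.inv δ) γ).mpr ⟨δ, rfl, hδ⟩⟩, ?_⟩
    intro δ' hδ'
    obtain ⟨b, hb1, hb2⟩ := (sinv δ' γ).mp hδ'
    have hbE : b ∈ D.E := hγ.2 b hb2
    rw [hb1, invE b hbE]; exact hbE
  -- key identity: γ₂ = (γ₁⁻¹)(γ₁ γ₂)
  have keyid : ∀ γ₁ γ₂, G.d γ₁ = G.r γ₂ → γ₂ = G.mul (G.inv γ₁) (G.mul γ₁ γ₂) := by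
    intro γ₁ γ₂ hc
    rw [← G.mul_assoc (G.d_inv γ₁) hc, G.inv_mul, hc, G.unit_mul]
  have keycomp : ∀ γ₁ γ₂ : Γ, G.d γ₁ = G.r γ₂ →
      G.d (G.inv γ₁) = G.r (G.mul γ₁ γ₂) := by
    intro γ₁ γ₂ hc
    rw [G.d_inv, G.mul_r hc]
  -- anything related to γ₁γ with γ ∈ ker is related to γ₁
  have factC : ∀ γ₁ γ, γ ∈ kerSet D h → G.d γ₁ = G.r γ →
      ∀ δ, h δ (G.mul γ₁ γ) → h δ γ₁ := by
    intro γ₁ γ hγ hc δ hδ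
    obtain ⟨δ₁, δ₂, hc', heq, h1, h2⟩ := fwd δ γ₁ γ hc hδ
    have hδ₂ : δ₂ ∈ D.E := hγ.2 δ₂ h2
    have : D.d δ₁ = δ₂ := hc'.trans (D.r_unit δ₂ hδ₂)
    have : δ = δ₁ := by rw [heq, ← this, D.mul_unit]
    exact this ▸ h1
  -- Claim 3: closed under composition
  have claim3 : ∀ γ₁ γ₂, γ₁ ∈ kerSet D h → γ₂ ∈ kerSet D h → G.d γ₁ = G.r γ₂ →
      G.mul γ₁ γ₂ ∈ kerSet D h := by
    intro γ₁ γ₂ hγ₁ hγ₂ hc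
    obtain ⟨δ₂, hδ₂⟩ := hγ₂.1
    -- nonempty fiber
    have hδ₂' : h δ₂ (G.mul (G.inv γ₁) (G.mul γ₁ γ₂)) := (keyid γ₁ γ₂ hc) ▸ hδ₂
    obtain ⟨δa, δb, _, _, _, hb⟩ := fwd δ₂ (G.inv γ₁) (G.mul γ₁ γ₂) (keycomp γ₁ γ₂ hc) hδ₂'
    refine ⟨⟨δb, hb⟩, ?_⟩
    intro δ hδ
    obtain ⟨ε₁, ε₂, hc', heq, h1, h2⟩ := fwd δ γ₁ γ₂ hc hδ
    have hε₁ : ε₁ ∈ D.E := hγ₁.2 ε₁ h1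
    have hε₂ : ε₂ ∈ D.E := hγ₂.2 ε₂ h2
    have : ε₁ = D.r ε₂ := (D.d_unit ε₁ hε₁).symm.trans hc'
    rw [heq, this, D.unit_mul]; exact hε₂
  refine ⟨claim1, claim2, claim3, ?_⟩
  -- Claim 4: invariance under conjugation
  intro γ γ₁ hγ hc
  obtain ⟨δ₀, hδ₀⟩ := hγ.1
  -- nonempty fiber of γ₁γγ₁⁻¹
  have hδ₀' : h δ₀ (G.mul (G.inv γ₁) (G.mul γ₁ γ)) := (keyid γ₁ γ hc) ▸ hδ₀
  obtain ⟨δa, δb, _, _, _, hb⟩ := fwd δ₀ (G.inv γ₁) (G.mul γ₁ γ) (keycomp γ₁ γ hc) hδ₀'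
  have hbγ₁ : h δb γ₁ := factC γ₁ γ hγ hc δb hb
  have hbinv : h (D.inv δb) (G.inv γ₁) := (sinv (D.inv δb) γ₁).mpr ⟨δb, rfl, hbγ₁⟩
  have hcb : D.d δb = D.r (D.inv δb) := (D.r_inv δb).symm
  have hex := (bwd δb (D.inv δb) (G.mul γ₁ γ) (G.inv γ₁) hcb hb hbinv).2
  refine ⟨⟨D.mul δb (D.inv δb), hex⟩, ?_⟩
  -- every fiber element is a unit
  intro δ hδ
  have hcΓ : G.d (G.mul γ₁ γ) = G.r (G.inv γ₁) := by
    rw [G.mul_d hc, G.r_inv, claim1 γ hγ, ← hc]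
  obtain ⟨δ₁, δ₂, hc', heq, h1, h2⟩ := fwd δ (G.mul γ₁ γ) (G.inv γ₁) hcΓ hδ
  have h1' : h δ₁ γ₁ := factC γ₁ γ hγ hc δ₁ h1
  have hrel := (bwd δ₁ δ₂ γ₁ (G.inv γ₁) hc' h1' h2).2
  rw [G.mul_inv] at hrel
  exact eunit δ ⟨G.r γ₁, heq ▸ hrel, G.r_mem γ₁⟩
end

section
/- A Zakrzewski morphism φ : Γ ⇀ Δ is a monomorphism in the category of groupoids with Zakrzewski morphisms if and only if ker(φ) = Γ^{(0)} (equivalently: D(φ) = Γ and the only elements related by φ solely to units of Δ are the units of Γ). -/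
/-! ### Auxiliary lemmas for `stmt_13` -/

section Aux

variable {Γ Δ : Type*} {G : Gpd Γ} {D : Gpd Δ} {φ : Δ → Γ → Prop}

theorem Gpd.invE (G : Gpd Γ) {e : Γ} (he : e ∈ G.E) : G.inv e = e := by
  have h1 : G.d (G.inv e) = e := by rw [G.d_inv, G.r_unit e he]
  calc G.inv e = G.mul (G.inv e) (G.d (G.inv e)) := (G.mul_unit _).symm
    _ = G.mul (G.inv e) e := by rw [h1]
    _ = G.d e := G.inv_mul e
    _ = e := G.d_unit e he

theorem Gpd.mulE (G : Gpd Γ) {e : Γ} (he : e ∈ G.E) : G.mul e e = e := by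
  have h := G.unit_mul e
  rwa [G.r_unit e he] at h

theorem zSwap (hφ : IsZMorphism G D φ) (δ : Δ) (γ : Γ) :
    φ δ (G.inv γ) ↔ φ (D.inv δ) γ := by
  have h := congrFun (congrFun hφ.2.1 δ) γ
  simp only [RelComp, sRel] at h
  constructor
  · intro hx
    obtain ⟨y, hy, hyγ⟩ := h.mp ⟨G.inv γ, hx, rfl⟩
    rw [hy, D.inv_inv]; exact hyγ
  · intro hx
    obtain ⟨b, hb1, hb2⟩ := h.mpr ⟨D.inv δ, (D.inv_inv δ).symm, hx⟩
    rw [← hb2]; exact hb1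

theorem zInv (hφ : IsZMorphism G D φ) {δ : Δ} {γ : Γ} (h : φ δ γ) :
    φ (D.inv δ) (G.inv γ) := by
  rw [← zSwap hφ]
  rwa [G.inv_inv]

theorem zC1fwd (hφ : IsZMorphism G D φ) {c : Δ} {γ₁ γ₂ : Γ}
    (hc : G.d γ₁ = G.r γ₂) (h : φ c (G.mul γ₁ γ₂)) :
    ∃ δ₁ δ₂, D.d δ₁ = D.r δ₂ ∧ c = D.mul δ₁ δ₂ ∧ φ δ₁ γ₁ ∧ φ δ₂ γ₂ := by
  have h' := congrFun (congrFun hφ.1 c) (γ₁, γ₂)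
  simp only [RelComp, mRel, RelProd] at h'
  obtain ⟨p, ⟨hp1, hp2⟩, hp3, hp4⟩ := h'.mp ⟨G.mul γ₁ γ₂, h, hc, rfl⟩
  exact ⟨p.1, p.2, hp1, hp2, hp3, hp4⟩

theorem zC1bwd (hφ : IsZMorphism G D φ) {δ₁ δ₂ : Δ} {γ₁ γ₂ : Γ}
    (hc : D.d δ₁ = D.r δ₂) (h₁ : φ δ₁ γ₁) (h₂ : φ δ₂ γ₂) :
    G.d γ₁ = G.r γ₂ ∧ φ (D.mul δ₁ δ₂) (G.mul γ₁ γ₂) := by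
  have h' := congrFun (congrFun hφ.1 (D.mul δ₁ δ₂)) (γ₁, γ₂)
  simp only [RelComp, mRel, RelProd] at h'
  obtain ⟨y, hy1, hy2, hy3⟩ := h'.mpr ⟨(δ₁, δ₂), ⟨hc, rfl⟩, h₁, h₂⟩
  exact ⟨hy2, hy3 ▸ hy1⟩

theorem zUnitFwd (hφ : IsZMorphism G D φ) {δ : Δ} {γ : Γ} (h : φ δ γ)
    (hγ : γ ∈ G.E) : δ ∈ D.E := by
  have h' := congrFun (congrFun hφ.2.2 δ) ()
  simp only [RelComp, eRel] at h'
  exact h'.mp ⟨γ, h, hγ⟩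

theorem zUnitBwd (hφ : IsZMorphism G D φ) {δ : Δ} (hδ : δ ∈ D.E) :
    ∃ γ, φ δ γ ∧ γ ∈ G.E := by
  have h' := congrFun (congrFun hφ.2.2 δ) ()
  simp only [RelComp, eRel] at h'
  exact h'.mpr hδ

theorem zR (hφ : IsZMorphism G D φ) {δ : Δ} {γ : Γ} (h : φ δ γ) :
    φ (D.r δ) (G.r γ) := by
  have h2 := (zC1bwd hφ (G := G) (D.r_inv δ).symm h (zInv hφ h)).2
  rwa [D.mul_inv, G.mul_inv] at h2

theorem zD (hφ : IsZMorphism G D φ) {δ : Δ} {γ : Γ} (h : φ δ γ) :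
    φ (D.d δ) (G.d γ) := by
  have h2 := (zC1bwd hφ (G := G) (D.d_inv δ) (zInv hφ h) h).2
  rwa [D.inv_mul, G.inv_mul] at h2

theorem zFiberR (hφ : IsZMorphism G D φ) {δ : Δ} {a b : Γ}
    (ha : φ δ a) (hb : φ δ b) : G.r a = G.r b := by
  have h2 := (zC1bwd hφ (G := G) (D.d_inv δ) (zInv hφ ha) hb).1
  rwa [G.d_inv] at h2

theorem zFiberD (hφ : IsZMorphism G D φ) {δ : Δ} {a b : Γ}
    (ha : φ δ a) (hb : φ δ b) : G.d a = G.d b := by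
  have h2 := (zC1bwd hφ (G := G) (D.r_inv δ).symm ha (zInv hφ hb)).1
  rwa [G.r_inv] at h2

theorem zFiberQuot (hφ : IsZMorphism G D φ) {δ : Δ} {a b : Γ}
    (ha : φ δ a) (hb : φ δ b) : φ (D.d δ) (G.mul (G.inv a) b) := by
  have h2 := (zC1bwd hφ (G := G) (D.d_inv δ) (zInv hφ ha) hb).2
  rwa [D.inv_mul] at h2

theorem zStarInj (hφ : IsZMorphism G D φ) {δ δ' : Δ} {m : Γ}
    (h : φ δ m) (h' : φ δ' m) (hr : D.r δ = D.r δ') : δ = δ' := by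
  have hc : D.d (D.inv δ) = D.r δ' := by rw [D.d_inv, hr]
  have h2 := zC1bwd hφ hc (zInv hφ h) h'
  have hp : D.mul (D.inv δ) δ' ∈ D.E := by
    have h3 := h2.2
    rw [G.inv_mul] at h3
    exact zUnitFwd hφ h3 (G.d_mem m)
  have hrp : D.r (D.mul (D.inv δ) δ') = D.d δ := by rw [D.mul_r hc, D.r_inv]
  have hpu : D.mul (D.inv δ) δ' = D.d δ := by rw [← D.r_unit _ hp, hrp]
  have h4 : D.mul δ (D.mul (D.inv δ) δ') = δ' := by
    rw [← D.mul_assoc (D.r_inv δ).symm hc, D.mul_inv, hr, D.unit_mul]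
  rw [hpu, D.mul_unit] at h4
  exact h4

theorem zKerR (hφ : IsZMorphism G D φ) {x : Γ} (hx : ∀ δ', φ δ' x → δ' ∈ D.E)
    {c : Δ} (hcE : c ∈ D.E) (h : φ c (G.r x)) : φ c x := by
  have h' : φ c (G.mul x (G.inv x)) := by rwa [G.mul_inv]
  obtain ⟨δ₁, δ₂, hc12, hceq, h1, _⟩ := zC1fwd hφ (G.r_inv x).symm h'
  have hδ1 : δ₁ ∈ D.E := hx δ₁ h1
  have hd1 : δ₁ = D.r δ₂ := by rw [← hc12, D.d_unit _ hδ1]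
  have hcδ2 : c = δ₂ := by rw [hceq, hd1, D.unit_mul]
  have hδ1c : δ₁ = c := by rw [hd1, ← hcδ2, D.r_unit _ hcE]
  rwa [hδ1c] at h1

theorem zKerD (hφ : IsZMorphism G D φ) {x : Γ} (hx : ∀ δ', φ δ' x → δ' ∈ D.E)
    {c : Δ} (hcE : c ∈ D.E) (h : φ c (G.d x)) : φ c x := by
  have h' : φ c (G.mul (G.inv x) x) := by rwa [G.inv_mul]
  obtain ⟨δ₁, δ₂, hc12, hceq, h1, h2⟩ := zC1fwd hφ (G.d_inv x) h'
  have hδ2 : δ₂ ∈ D.E := hx δ₂ h2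
  have hd2 : δ₂ = D.d δ₁ := by rw [← D.r_unit _ hδ2, ← hc12]
  have hcδ1 : c = δ₁ := by rw [hceq, hd2, D.mul_unit]
  have hδ2c : δ₂ = c := by rw [hd2, ← hcδ1, D.d_unit _ hcE]
  rwa [hδ2c] at h2

end Aux


section Constructions

/-- The discrete groupoid on a type. -/
def discreteGpd (X : Type*) : Gpd X where
  d x := x
  r x := x
  inv x := x
  mul _ y := y
  E := Set.univ
  d_mem _ := Set.mem_univ _
  r_mem _ := Set.mem_univ _
  d_unit _ _ := rfl
  r_unit _ _ := rfl
  mul_d _ := rfl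
  mul_r h := h.symm
  mul_assoc _ _ := rfl
  unit_mul _ := rfl
  mul_unit _ := rfl
  inv_inv _ := rfl
  d_inv _ := rfl
  r_inv _ := rfl
  mul_inv _ := rfl
  inv_mul _ := rfl

/-- Disjoint union of two groupoids. -/
def sumGpd {α β : Type*} (A : Gpd α) (B : Gpd β) : Gpd (α ⊕ β) where
  d := Sum.map A.d B.d
  r := Sum.map A.r B.r
  inv := Sum.map A.inv B.inv
  mul x y :=
    match x, y with
    | .inl a, .inl a' => .inl (A.mul a a')
    | .inr b, .inr b' => .inr (B.mul b b')
    | x, _ => x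
  E := {x | Sum.elim (· ∈ A.E) (· ∈ B.E) x}
  d_mem x := by cases x with
    | inl a => exact A.d_mem a
    | inr b => exact B.d_mem b
  r_mem x := by cases x with
    | inl a => exact A.r_mem a
    | inr b => exact B.r_mem b
  d_unit e he := by cases e with
    | inl a => exact congrArg Sum.inl (A.d_unit a he)
    | inr b => exact congrArg Sum.inr (B.d_unit b he)
  r_unit e he := by cases e with
    | inl a => exact congrArg Sum.inl (A.r_unit a he)
    | inr b => exact congrArg Sum.inr (B.r_unit b he)
  mul_d {γ₁ γ₂} h := by
    cases γ₁ with
    | inl a => cases γ₂ with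
      | inl a' => exact congrArg Sum.inl (A.mul_d (Sum.inl_injective h))
      | inr b => exact (Sum.inl_ne_inr h).elim
    | inr b => cases γ₂ with
      | inl a => exact (Sum.inr_ne_inl h).elim
      | inr b' => exact congrArg Sum.inr (B.mul_d (Sum.inr_injective h))
  mul_r {γ₁ γ₂} h := by
    cases γ₁ with
    | inl a => cases γ₂ with
      | inl a' => exact congrArg Sum.inl (A.mul_r (Sum.inl_injective h))
      | inr b => exact (Sum.inl_ne_inr h).elim
    | inr b => cases γ₂ with
      | inl a => exact (Sum.inr_ne_inl h).elim
      | inr b' => exact congrArg Sum.inr (B.mul_r (Sum.inr_injective h))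
  mul_assoc {a b c} h1 h2 := by
    cases a with
    | inl x => cases b with
      | inl y => cases c with
        | inl z =>
            exact congrArg Sum.inl (A.mul_assoc (Sum.inl_injective h1) (Sum.inl_injective h2))
        | inr z => exact (Sum.inl_ne_inr h2).elim
      | inr y => exact (Sum.inl_ne_inr h1).elim
    | inr x => cases b with
      | inl y => exact (Sum.inr_ne_inl h1).elim
      | inr y => cases c with
        | inl z => exact (Sum.inr_ne_inl h2).elim
        | inr z =>
            exact congrArg Sum.inr (B.mul_assoc (Sum.inr_injective h1) (Sum.inr_injective h2))
  unit_mul γ := by cases γ with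
    | inl a => exact congrArg Sum.inl (A.unit_mul a)
    | inr b => exact congrArg Sum.inr (B.unit_mul b)
  mul_unit γ := by cases γ with
    | inl a => exact congrArg Sum.inl (A.mul_unit a)
    | inr b => exact congrArg Sum.inr (B.mul_unit b)
  inv_inv γ := by cases γ with
    | inl a => exact congrArg Sum.inl (A.inv_inv a)
    | inr b => exact congrArg Sum.inr (B.inv_inv b)
  d_inv γ := by cases γ with
    | inl a => exact congrArg Sum.inl (A.d_inv a)
    | inr b => exact congrArg Sum.inr (B.d_inv b)
  r_inv γ := by cases γ with
    | inl a => exact congrArg Sum.inl (A.r_inv a)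
    | inr b => exact congrArg Sum.inr (B.r_inv b)
  mul_inv γ := by cases γ with
    | inl a => exact congrArg Sum.inl (A.mul_inv a)
    | inr b => exact congrArg Sum.inr (B.mul_inv b)
  inv_mul γ := by cases γ with
    | inl a => exact congrArg Sum.inl (A.inv_mul a)
    | inr b => exact congrArg Sum.inr (B.inv_mul b)

/-- The graph of a (composability-reflecting, unit-bijective-enough) functor
is a Zakrzewski morphism. -/
theorem graphZ {K Γ : Type*} (GK : Gpd K) (G : Gpd Γ) (F : K → Γ)
    (hinv : ∀ k, F (GK.inv k) = G.inv (F k))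
    (hcomp : ∀ k₁ k₂, GK.d k₁ = GK.r k₂ ↔ G.d (F k₁) = G.r (F k₂))
    (hmul : ∀ k₁ k₂, GK.d k₁ = GK.r k₂ → F (GK.mul k₁ k₂) = G.mul (F k₁) (F k₂))
    (hunits : ∀ γ, (∃ k ∈ GK.E, γ = F k) ↔ γ ∈ G.E) :
    IsZMorphism GK G (fun γ k => γ = F k) := by
  refine ⟨?_, ?_, ?_⟩
  · funext γ p
    apply propext
    simp only [RelComp, mRel, RelProd]
    constructor
    · rintro ⟨k, rfl, hc, rfl⟩
      exact ⟨(F p.1, F p.2), ⟨(hcomp p.1 p.2).mp hc, hmul p.1 p.2 hc⟩, rfl, rfl⟩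
    · rintro ⟨q, ⟨hc, rfl⟩, h1, h2⟩
      have hc' : GK.d p.1 = GK.r p.2 := by
        apply (hcomp p.1 p.2).mpr
        rw [← h1, ← h2]; exact hc
      refine ⟨GK.mul p.1 p.2, ?_, hc', rfl⟩
      rw [hmul p.1 p.2 hc', h1, h2]
  · funext γ k
    apply propext
    simp only [RelComp, sRel]
    constructor
    · rintro ⟨b, rfl, rfl⟩
      exact ⟨F k, by rw [hinv], rfl⟩
    · rintro ⟨c, rfl, rfl⟩
      exact ⟨GK.inv k, by rw [hinv], rfl⟩
  · funext γ u
    apply propext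
    simp only [RelComp, eRel]
    rw [← hunits γ]
    constructor
    · rintro ⟨k, rfl, hk⟩; exact ⟨k, hk, rfl⟩
    · rintro ⟨k, hk, rfl⟩; exact ⟨k, rfl, hk⟩

end Constructions


section KerIso

variable {Γ Δ : Type*}

/-- Kernel elements which are isotropy arrows at the unit `u`. -/
def kerIso (G : Gpd Γ) (D : Gpd Δ) (φ : Δ → Γ → Prop) (u : Γ) : Set Γ :=
  {γ | G.r γ = u ∧ G.d γ = u ∧ (∃ δ, φ δ γ) ∧ ∀ δ, φ δ γ → δ ∈ D.E}

/-- The group of isotropy kernel arrows at `u`, as a groupoid. -/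
def kerIsoGpd (G : Gpd Γ) (D : Gpd Δ) (φ : Δ → Γ → Prop) (u : Γ)
    (h0 : u ∈ kerIso G D φ u)
    (hinv : ∀ γ ∈ kerIso G D φ u, G.inv γ ∈ kerIso G D φ u)
    (hmul : ∀ γ₁ ∈ kerIso G D φ u, ∀ γ₂ ∈ kerIso G D φ u,
      G.mul γ₁ γ₂ ∈ kerIso G D φ u) :
    Gpd ↥(kerIso G D φ u) where
  d _ := ⟨u, h0⟩
  r _ := ⟨u, h0⟩
  inv s := ⟨G.inv s.1, hinv _ s.2⟩
  mul s t := ⟨G.mul s.1 t.1, hmul _ s.2 _ t.2⟩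
  E := {s | s.1 = u}
  d_mem _ := rfl
  r_mem _ := rfl
  d_unit e he := Subtype.ext he.symm
  r_unit e he := Subtype.ext he.symm
  mul_d _ := rfl
  mul_r _ := rfl
  mul_assoc {a b c} _ _ :=
    Subtype.ext (G.mul_assoc (a.2.2.1.trans b.2.1.symm) (b.2.2.1.trans c.2.1.symm))
  unit_mul s := Subtype.ext (by
    have h := G.unit_mul s.1
    rwa [s.2.1] at h)
  mul_unit s := Subtype.ext (by
    have h := G.mul_unit s.1
    rwa [s.2.2.1] at h)
  inv_inv s := Subtype.ext (G.inv_inv s.1)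
  d_inv _ := rfl
  r_inv _ := rfl
  mul_inv s := Subtype.ext (by
    show G.mul s.1 (G.inv s.1) = u
    rw [G.mul_inv, s.2.1])
  inv_mul s := Subtype.ext (by
    show G.mul (G.inv s.1) s.1 = u
    rw [G.inv_mul, s.2.2.1])

end KerIso

section PairArr

variable {Γ : Type*}

/-- A unit of `Γ` attached to each point of the two-point pair groupoid. -/
def bPt.{v} (G : Gpd Γ) (γ₀ : Γ) (a : ULift.{v} Bool) : Γ :=
  if a.down then G.r γ₀ else G.d γ₀

/-- The image in `Γ` of each arrow of the two-point pair groupoid. -/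
def pairArr.{v} (G : Gpd Γ) (γ₀ : Γ) (p : ULift.{v} Bool × ULift.{v} Bool) : Γ :=
  match p.1.down, p.2.down with
  | true, true => G.r γ₀
  | true, false => γ₀
  | false, true => G.inv γ₀
  | false, false => G.d γ₀

variable {G : Gpd Γ} {γ₀ : Γ}

theorem bPt_mem.{v} (a : ULift.{v} Bool) : bPt G γ₀ a ∈ G.E := by
  rcases a with ⟨a⟩; cases a
  · exact G.d_mem γ₀
  · exact G.r_mem γ₀

theorem bPt_inj.{v} (huv : G.r γ₀ ≠ G.d γ₀) {a b : ULift.{v} Bool}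
    (h : bPt G γ₀ a = bPt G γ₀ b) : a = b := by
  rcases a with ⟨a⟩; rcases b with ⟨b⟩
  cases a <;> cases b <;> simp [bPt] at h ⊢
  · exact huv h.symm
  · exact huv h

theorem pairArr_r.{v} (p : ULift.{v} Bool × ULift.{v} Bool) :
    G.r (pairArr G γ₀ p) = bPt G γ₀ p.1 := by
  rcases p with ⟨⟨a⟩, ⟨b⟩⟩
  cases a <;> cases b <;> simp only [pairArr, bPt]
  · exact G.r_unit _ (G.d_mem γ₀)
  · exact (G.r_inv γ₀).trans (by simp)
  · rfl
  · exact G.r_unit _ (G.r_mem γ₀)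

theorem pairArr_d.{v} (p : ULift.{v} Bool × ULift.{v} Bool) :
    G.d (pairArr G γ₀ p) = bPt G γ₀ p.2 := by
  rcases p with ⟨⟨a⟩, ⟨b⟩⟩
  cases a <;> cases b <;> simp only [pairArr, bPt]
  · exact G.d_unit _ (G.d_mem γ₀)
  · exact (G.d_inv γ₀).trans (by simp)
  · rfl
  · exact G.d_unit _ (G.r_mem γ₀)

theorem pairArr_inv.{v} (p : ULift.{v} Bool × ULift.{v} Bool) :
    G.inv (pairArr G γ₀ p) = pairArr G γ₀ (p.2, p.1) := by
  rcases p with ⟨⟨a⟩, ⟨b⟩⟩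
  cases a <;> cases b <;> simp only [pairArr]
  · exact G.invE (G.d_mem γ₀)
  · exact G.inv_inv γ₀
  · exact G.invE (G.r_mem γ₀)

theorem pairArr_mul.{v} (a b c : ULift.{v} Bool) :
    G.mul (pairArr G γ₀ (a, b)) (pairArr G γ₀ (b, c)) = pairArr G γ₀ (a, c) := by
  rcases a with ⟨a⟩; rcases b with ⟨b⟩; rcases c with ⟨c⟩
  cases a <;> cases b <;> cases c <;> simp only [pairArr]
  · exact G.mulE (G.d_mem γ₀)
  · -- d·(inv γ₀) = inv γ₀ : unit_mul with r (inv γ₀) = d γ₀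
    conv_lhs => rw [← G.r_inv γ₀]
    exact G.unit_mul _
  · exact G.inv_mul γ₀
  · -- (inv γ₀)·(r γ₀) = inv γ₀ : mul_unit with d (inv γ₀) = r γ₀
    conv_lhs => rw [← G.d_inv γ₀]
    exact G.mul_unit _
  · -- γ₀ · d γ₀ = γ₀
    exact G.mul_unit γ₀
  · -- γ₀ · inv γ₀ = r γ₀
    exact G.mul_inv γ₀
  · -- r γ₀ · γ₀ = γ₀
    exact G.unit_mul γ₀
  · exact G.mulE (G.r_mem γ₀)

theorem pairArr_diag.{v} (a : ULift.{v} Bool) : pairArr G γ₀ (a, a) = bPt G γ₀ a := by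
  rcases a with ⟨a⟩; cases a <;> rfl

end PairArr


/-- Cancellation: if the kernel of `φ` is exactly the unit space, then `φ`
is left-cancellable. -/
theorem zCancel {Γ Δ : Type*} {G : Gpd Γ} {D : Gpd Δ} {φ : Δ → Γ → Prop}
    (hφ : IsZMorphism G D φ) (hker : kerSet D φ = G.E)
    {K : Type*} {GK : Gpd K} {ψ₁ ψ₂ : Γ → K → Prop}
    (h1 : IsZMorphism GK G ψ₁) (h2 : IsZMorphism GK G ψ₂)
    (hc : RelComp φ ψ₁ = RelComp φ ψ₂) {γ : Γ} {k : K} (h : ψ₁ γ k) : ψ₂ γ k := by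
  -- totality of the domain of φ
  have domAll : ∀ x : Γ, ∃ δ, φ δ x := by
    intro x
    have hrx : G.r x ∈ kerSet D φ := by rw [hker]; exact G.r_mem x
    obtain ⟨δ₀, h₀⟩ := hrx.1
    have h₀' : φ δ₀ (G.mul x (G.inv x)) := by rwa [G.mul_inv]
    obtain ⟨δ₁, _, _, _, hδ₁, _⟩ := zC1fwd hφ (G.r_inv x).symm h₀'
    exact ⟨δ₁, hδ₁⟩
  obtain ⟨δ, hδ⟩ := domAll γ
  have hR : RelComp φ ψ₂ δ k := by
    rw [← hc]; exact ⟨γ, hδ, h⟩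
  obtain ⟨γ', hδγ', hψ2'⟩ := hR
  -- every δ₂ related to γ' is related to γ
  have hsub : ∀ δ₂, φ δ₂ γ' → φ δ₂ γ := by
    intro δ₂ hd2
    have hL2 : RelComp φ ψ₁ δ₂ k := by
      rw [hc]; exact ⟨γ', hd2, hψ2'⟩
    obtain ⟨y, hy, hy1⟩ := hL2
    have hry : G.r y = G.r γ := by
      have ha := zFiberR hφ hy hd2
      have hb := zFiberR hφ hδγ' hδ
      rw [ha, hb]
    have hyγ : y = γ := zStarInj h1 hy1 h hry
    rwa [hyγ] at hy
  have hrr : G.r γ = G.r γ' := zFiberR hφ hδ hδγ'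
  have hdd : G.d γ = G.d γ' := zFiberD hφ hδ hδγ'
  have hcompm : G.d (G.inv γ) = G.r γ' := by rw [G.d_inv, hrr]
  have hm : φ (D.d δ) (G.mul (G.inv γ) γ') := zFiberQuot hφ hδ hδγ'
  have hmker : ∀ δ'', φ δ'' (G.mul (G.inv γ) γ') → δ'' ∈ D.E := by
    intro δ'' hd''
    obtain ⟨δ₁, δ₂, hc12, heq'', hd1, hd2⟩ := zC1fwd hφ hcompm hd''
    have hgd2 : φ δ₂ γ := hsub δ₂ hd2
    have hginv : φ (D.inv δ₁) γ := (zSwap hφ δ₁ γ).mp hd1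
    have hreq : D.r (D.inv δ₁) = D.r δ₂ := by rw [D.r_inv, hc12]
    have hδeq : D.inv δ₁ = δ₂ := zStarInj hφ hginv hgd2 hreq
    rw [heq'', ← hδeq, D.mul_inv]
    exact D.r_mem δ₁
  have hmE : G.mul (G.inv γ) γ' ∈ G.E := by
    rw [← hker]; exact ⟨⟨_, hm⟩, hmker⟩
  have hmd : G.mul (G.inv γ) γ' = G.d γ := by
    have h1' : G.d (G.mul (G.inv γ) γ') = G.d γ' := G.mul_d hcompm
    have h2' := G.d_unit _ hmE
    rw [← h2', h1', ← hdd]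
  have hstep : G.mul γ (G.mul (G.inv γ) γ') = γ' := by
    rw [← G.mul_assoc (G.r_inv γ).symm hcompm, G.mul_inv, hrr, G.unit_mul]
  rw [hmd, G.mul_unit] at hstep
  rw [hstep]; exact hψ2'


/-- The "indicator" relation attached to a function on units is a Zakrzewski
morphism from a discrete groupoid. -/
theorem indicatorZ {Γ : Type*} (G : Gpd Γ) {X : Type*} (f : Γ → X) :
    IsZMorphism (discreteGpd X) G (fun γ k => γ ∈ G.E ∧ f γ = k) := by
  refine ⟨?_, ?_, ?_⟩
  · funext γ p
    apply propext
    simp only [RelComp, mRel, RelProd, discreteGpd]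
    constructor
    · rintro ⟨k, ⟨hE, hf⟩, h12, hk⟩
      refine ⟨(γ, γ), ⟨by rw [G.d_unit _ hE, G.r_unit _ hE], (G.mulE hE).symm⟩,
        ⟨hE, ?_⟩, ⟨hE, ?_⟩⟩
      · rw [hf, hk, h12]
      · rw [hf, hk]
    · rintro ⟨q, ⟨hdr, hmul⟩, ⟨h1E, h1f⟩, ⟨h2E, h2f⟩⟩
      have hq : q.1 = q.2 := by rw [← G.d_unit _ h1E, hdr, G.r_unit _ h2E]
      have hm2 : G.mul q.1 q.2 = q.2 := by rw [← hq]; exact G.mulE h1E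
      have hγ : γ = q.2 := hmul.trans hm2
      refine ⟨p.2, ⟨by rw [hγ]; exact h2E, by rw [hγ]; exact h2f⟩, ?_, rfl⟩
      rw [← h1f, ← h2f, hq]
  · funext γ k
    apply propext
    simp only [RelComp, sRel, discreteGpd]
    constructor
    · rintro ⟨b, ⟨hE, hf⟩, rfl⟩
      exact ⟨γ, (G.invE hE).symm, hE, hf⟩
    · rintro ⟨c, rfl, hE, hf⟩
      exact ⟨k, ⟨by rw [G.invE hE]; exact hE, by rw [G.invE hE]; exact hf⟩, rfl⟩
  · funext γ u
    apply propext
    simp only [RelComp, eRel, discreteGpd]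
    constructor
    · rintro ⟨k, ⟨hE, _⟩, _⟩; exact hE
    · intro hE; exact ⟨f γ, ⟨hE, rfl⟩, Set.mem_univ _⟩

/-- Boolean negation on `ULift Bool`. -/
def bNeg.{v} (a : ULift.{v} Bool) : ULift.{v} Bool := ⟨!a.down⟩

theorem bNeg_inj.{v} {a b : ULift.{v} Bool} (h : bNeg a = bNeg b) : a = b := by
  rcases a with ⟨a⟩; rcases b with ⟨b⟩
  cases a <;> cases b <;> simp_all [bNeg]

/-- A Zakrzewski morphism is a monomorphism (left-cancellable in the category
of groupoids with Zakrzewski morphisms) if and only if its kernel is exactly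
the unit space of its source. -/
theorem stmt_13 {Γ Δ : Type u} (G : Gpd Γ) (D : Gpd Δ) (φ : Δ → Γ → Prop)
    (hφ : IsZMorphism G D φ) :
    (∀ (K : Type u) (GK : Gpd K) (ψ₁ ψ₂ : Γ → K → Prop),
      IsZMorphism GK G ψ₁ → IsZMorphism GK G ψ₂ →
      RelComp φ ψ₁ = RelComp φ ψ₂ → ψ₁ = ψ₂) ↔
    kerSet D φ = G.E := by
  classical
  constructor
  · -- mono → kernel is the unit space
    intro hmono
    apply Set.Subset.antisymm
    · -- kerSet ⊆ G.E
      intro γ₀ hγ₀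
      by_contra hγ₀E
      obtain ⟨hdom, hkil⟩ := hγ₀
      have huE : G.r γ₀ ∈ G.E := G.r_mem γ₀
      have hvE : G.d γ₀ ∈ G.E := G.d_mem γ₀
      have hDinvE : ∀ δ, D.inv δ ∈ D.E → δ ∈ D.E := by
        intro δ h2
        rw [← D.inv_inv δ, D.invE h2]; exact h2
      have hkil' : ∀ δ, φ δ (G.inv γ₀) → δ ∈ D.E := by
        intro δ hδ
        exact hDinvE δ (hkil _ ((zSwap hφ δ γ₀).mp hδ))
      have hu2g : ∀ δ, φ δ (G.r γ₀) → φ δ γ₀ := by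
        intro δ hδ
        exact zKerR hφ hkil (zUnitFwd hφ hδ huE) hδ
      have hv2g : ∀ δ, φ δ (G.d γ₀) → φ δ γ₀ := by
        intro δ hδ
        exact zKerD hφ hkil (zUnitFwd hφ hδ hvE) hδ
      have hg2u : ∀ δ, φ δ γ₀ → φ δ (G.r γ₀) := by
        intro δ hδ
        have h1 := zR hφ hδ
        rwa [D.r_unit _ (hkil δ hδ)] at h1
      have hg2v : ∀ δ, φ δ γ₀ → φ δ (G.d γ₀) := by
        intro δ hδ
        have h1 := zD hφ hδ
        rwa [D.d_unit _ (hkil δ hδ)] at h1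
      have hA : ∀ δ, φ δ (G.r γ₀) ↔ φ δ (G.d γ₀) :=
        fun δ => ⟨fun h => hg2v δ (hu2g δ h), fun h => hg2u δ (hv2g δ h)⟩
      have hB : ∀ δ, φ δ γ₀ ↔ φ δ (G.inv γ₀) := by
        intro δ
        constructor
        · intro h
          apply zKerR hφ hkil' (hkil δ h)
          rw [G.r_inv]
          exact hg2v δ h
        · intro h
          have hδE := hkil' δ h
          have h1 := zD hφ h
          rw [D.d_unit _ hδE, G.d_inv] at h1
          exact zKerR hφ hkil hδE h1
      by_cases huv : G.r γ₀ = G.d γ₀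
      · -- isotropy case
        have h0 : G.r γ₀ ∈ kerIso G D φ (G.r γ₀) := by
          refine ⟨G.r_unit _ huE, G.d_unit _ huE, ?_, fun δ h => zUnitFwd hφ h huE⟩
          obtain ⟨δ₀, hδ₀⟩ := hdom
          exact ⟨δ₀, hg2u δ₀ hδ₀⟩
        have hγ₀S : γ₀ ∈ kerIso G D φ (G.r γ₀) := ⟨rfl, huv.symm, hdom, hkil⟩
        have hSinv : ∀ x ∈ kerIso G D φ (G.r γ₀), G.inv x ∈ kerIso G D φ (G.r γ₀) := by
          intro x hx
          refine ⟨?_, ?_, ?_, ?_⟩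
          · rw [G.r_inv, hx.2.1]
          · rw [G.d_inv, hx.1]
          · obtain ⟨δ, hδ⟩ := hx.2.2.1
            exact ⟨D.inv δ, zInv hφ hδ⟩
          · intro δ hδ
            exact hDinvE δ (hx.2.2.2 _ ((zSwap hφ δ x).mp hδ))
        have hSmul : ∀ x ∈ kerIso G D φ (G.r γ₀), ∀ y ∈ kerIso G D φ (G.r γ₀),
            G.mul x y ∈ kerIso G D φ (G.r γ₀) := by
          intro x hx y hy
          have hcomp : G.d x = G.r y := hx.2.1.trans hy.1.symm
          refine ⟨?_, ?_, ?_, ?_⟩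
          · rw [G.mul_r hcomp, hx.1]
          · rw [G.mul_d hcomp, hy.2.1]
          · obtain ⟨c, hc⟩ := hx.2.2.1
            have hcE := hx.2.2.2 _ hc
            have hcy : φ c y := by
              apply zKerR hφ hy.2.2.2 hcE
              have h1 := zD hφ hc
              rw [D.d_unit _ hcE] at h1
              rw [hy.1, ← hx.2.1]
              exact h1
            have hDc : D.d c = D.r c := by rw [D.d_unit _ hcE, D.r_unit _ hcE]
            have hprod := (zC1bwd hφ hDc hc hcy).2
            rw [D.mulE hcE] at hprod
            exact ⟨c, hprod⟩
          · intro δ hδ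
            obtain ⟨δ₁, δ₂, hc12, heq, h1', h2'⟩ := zC1fwd hφ hcomp hδ
            have hδ1E := hx.2.2.2 _ h1'
            have hδ2E := hy.2.2.2 _ h2'
            have hδ1r : δ₁ = D.r δ₂ := by rw [← hc12, D.d_unit _ hδ1E]
            rw [heq, hδ1r, D.unit_mul]
            exact hδ2E
        -- the comparison groupoid
        set SG := kerIsoGpd G D φ (G.r γ₀) h0 hSinv hSmul with hSG
        set GK := sumGpd (discreteGpd ↥(G.E \ {G.r γ₀})) SG with hGK
        set F₁ : (↥(G.E \ {G.r γ₀}) ⊕ ↥(kerIso G D φ (G.r γ₀))) → Γ :=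
          Sum.elim (fun e => e.1) (fun s => s.1) with hF₁
        set F₂ : (↥(G.E \ {G.r γ₀}) ⊕ ↥(kerIso G D φ (G.r γ₀))) → Γ :=
          Sum.elim (fun e => e.1) (fun _ => G.r γ₀) with hF₂
        have hZ1 : IsZMorphism GK G (fun γ k => γ = F₁ k) := by
          apply graphZ
          · intro k
            cases k with
            | inl e => exact (G.invE e.2.1).symm
            | inr s => rfl
          · intro k₁ k₂
            cases k₁ with
            | inl e₁ =>
              cases k₂ with
              | inl e₂ =>
                constructor
                · intro h
                  have h'' : e₁ = e₂ := Sum.inl_injective h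
                  show G.d (e₁ : Γ) = G.r (e₂ : Γ)
                  rw [h'', G.d_unit _ e₂.2.1, G.r_unit _ e₂.2.1]
                · intro h
                  have h' : G.d (e₁ : Γ) = G.r (e₂ : Γ) := h
                  rw [G.d_unit _ e₁.2.1, G.r_unit _ e₂.2.1] at h'
                  exact congrArg Sum.inl (Subtype.ext h')
              | inr s =>
                constructor
                · intro h; exact (Sum.inl_ne_inr h).elim
                · intro h
                  exfalso
                  have h' : G.d (e₁ : Γ) = G.r (s : Γ) := h
                  rw [G.d_unit _ e₁.2.1, s.2.1] at h'
                  exact e₁.2.2 h'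
            | inr s =>
              cases k₂ with
              | inl e₂ =>
                constructor
                · intro h; exact (Sum.inr_ne_inl h).elim
                · intro h
                  exfalso
                  have h' : G.d (s : Γ) = G.r (e₂ : Γ) := h
                  rw [s.2.2.1, G.r_unit _ e₂.2.1] at h'
                  exact e₂.2.2 h'.symm
              | inr t =>
                constructor
                · intro _
                  show G.d s.1 = G.r t.1
                  rw [s.2.2.1, t.2.1]
                · intro _; rfl
          · intro k₁ k₂ h
            cases k₁ with
            | inl e₁ =>
              cases k₂ with
              | inl e₂ =>
                have h'' : e₁ = e₂ := Sum.inl_injective h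
                show (e₂ : Γ) = G.mul e₁.1 e₂.1
                rw [h'']
                exact (G.mulE e₂.2.1).symm
              | inr s => exact (Sum.inl_ne_inr h).elim
            | inr s =>
              cases k₂ with
              | inl e₂ => exact (Sum.inr_ne_inl h).elim
              | inr t => rfl
          · intro γ
            constructor
            · rintro ⟨k, hk, rfl⟩
              cases k with
              | inl e => exact e.2.1
              | inr s =>
                have hk' : (s : Γ) = G.r γ₀ := hk
                show (s : Γ) ∈ G.E
                rw [hk']; exact huE
            · intro hγ
              by_cases hgu : γ = G.r γ₀
              · exact ⟨Sum.inr ⟨G.r γ₀, h0⟩, rfl, hgu⟩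
              · exact ⟨Sum.inl ⟨γ, hγ, hgu⟩, by trivial, rfl⟩
        have hZ2 : IsZMorphism GK G (fun γ k => γ = F₂ k) := by
          apply graphZ
          · intro k
            cases k with
            | inl e => exact (G.invE e.2.1).symm
            | inr s => exact (G.invE huE).symm
          · intro k₁ k₂
            cases k₁ with
            | inl e₁ =>
              cases k₂ with
              | inl e₂ =>
                constructor
                · intro h
                  have h'' : e₁ = e₂ := Sum.inl_injective h
                  show G.d (e₁ : Γ) = G.r (e₂ : Γ)
                  rw [h'', G.d_unit _ e₂.2.1, G.r_unit _ e₂.2.1]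
                · intro h
                  have h' : G.d (e₁ : Γ) = G.r (e₂ : Γ) := h
                  rw [G.d_unit _ e₁.2.1, G.r_unit _ e₂.2.1] at h'
                  exact congrArg Sum.inl (Subtype.ext h')
              | inr s =>
                constructor
                · intro h; exact (Sum.inl_ne_inr h).elim
                · intro h
                  exfalso
                  have h' : G.d (e₁ : Γ) = G.r (G.r γ₀) := h
                  rw [G.d_unit _ e₁.2.1, G.r_unit _ huE] at h'
                  exact e₁.2.2 h'
            | inr s =>
              cases k₂ with
              | inl e₂ =>
                constructor
                · intro h; exact (Sum.inr_ne_inl h).elim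
                · intro h
                  exfalso
                  have h' : G.d (G.r γ₀) = G.r (e₂ : Γ) := h
                  rw [G.d_unit _ huE, G.r_unit _ e₂.2.1] at h'
                  exact e₂.2.2 h'.symm
              | inr t =>
                constructor
                · intro _
                  show G.d (G.r γ₀) = G.r (G.r γ₀)
                  rw [G.d_unit _ huE, G.r_unit _ huE]
                · intro _; rfl
          · intro k₁ k₂ h
            cases k₁ with
            | inl e₁ =>
              cases k₂ with
              | inl e₂ =>
                have h'' : e₁ = e₂ := Sum.inl_injective h
                show (e₂ : Γ) = G.mul e₁.1 e₂.1
                rw [h'']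
                exact (G.mulE e₂.2.1).symm
              | inr s => exact (Sum.inl_ne_inr h).elim
            | inr s =>
              cases k₂ with
              | inl e₂ => exact (Sum.inr_ne_inl h).elim
              | inr t => exact (G.mulE huE).symm
          · intro γ
            constructor
            · rintro ⟨k, hk, rfl⟩
              cases k with
              | inl e => exact e.2.1
              | inr s => exact huE
            · intro hγ
              by_cases hgu : γ = G.r γ₀
              · exact ⟨Sum.inr ⟨G.r γ₀, h0⟩, rfl, hgu⟩
              · exact ⟨Sum.inl ⟨γ, hγ, hgu⟩, by trivial, rfl⟩
        have hcompeq : RelComp φ (fun γ k => γ = F₁ k) =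
            RelComp φ (fun γ k => γ = F₂ k) := by
          funext δ k
          apply propext
          simp only [RelComp]
          constructor
          · rintro ⟨γ, hφγ, rfl⟩
            cases k with
            | inl e => exact ⟨_, hφγ, rfl⟩
            | inr s =>
              have hφγ' : φ δ (s : Γ) := hφγ
              have hδE := s.2.2.2.2 δ hφγ'
              have h1 := zD hφ hφγ'
              rw [D.d_unit _ hδE, s.2.2.1] at h1
              exact ⟨G.r γ₀, h1, rfl⟩
          · rintro ⟨γ, hφγ, rfl⟩
            cases k with
            | inl e => exact ⟨_, hφγ, rfl⟩
            | inr s =>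
              have hφγ' : φ δ (G.r γ₀) := hφγ
              have hδE := zUnitFwd hφ hφγ' huE
              refine ⟨s.1, ?_, rfl⟩
              apply zKerR hφ s.2.2.2.2 hδE
              rw [s.2.1]
              exact hφγ'
        have hpsi := hmono _ GK _ _ hZ1 hZ2 hcompeq
        have hev := congrFun (congrFun hpsi γ₀) (Sum.inr ⟨γ₀, hγ₀S⟩)
        have hgu : γ₀ = G.r γ₀ := Eq.mp hev rfl
        apply hγ₀E
        rw [hgu]
        exact huE
      · -- distinct endpoints case
        set GK := sumGpd (discreteGpd ↥(G.E \ {G.r γ₀, G.d γ₀}))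
          (pairGpd (ULift.{u} Bool)) with hGK
        set F₁ : (↥(G.E \ {G.r γ₀, G.d γ₀}) ⊕ (ULift.{u} Bool × ULift.{u} Bool)) → Γ :=
          Sum.elim (fun e => e.1) (pairArr G γ₀) with hF₁
        set F₂ : (↥(G.E \ {G.r γ₀, G.d γ₀}) ⊕ (ULift.{u} Bool × ULift.{u} Bool)) → Γ :=
          Sum.elim (fun e => e.1) (fun p => pairArr G γ₀ (bNeg p.1, bNeg p.2)) with hF₂
        have hZ1 : IsZMorphism GK G (fun γ k => γ = F₁ k) := by
          apply graphZ
          · intro k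
            cases k with
            | inl e => exact (G.invE e.2.1).symm
            | inr p => exact (pairArr_inv p).symm
          · intro k₁ k₂
            cases k₁ with
            | inl e₁ =>
              cases k₂ with
              | inl e₂ =>
                constructor
                · intro h
                  have h'' : e₁ = e₂ := Sum.inl_injective h
                  show G.d (e₁ : Γ) = G.r (e₂ : Γ)
                  rw [h'', G.d_unit _ e₂.2.1, G.r_unit _ e₂.2.1]
                · intro h
                  have h' : G.d (e₁ : Γ) = G.r (e₂ : Γ) := h
                  rw [G.d_unit _ e₁.2.1, G.r_unit _ e₂.2.1] at h'
                  exact congrArg Sum.inl (Subtype.ext h')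
              | inr p =>
                constructor
                · intro h; exact (Sum.inl_ne_inr h).elim
                · intro h
                  exfalso
                  have h' : G.d (e₁ : Γ) = G.r (pairArr G γ₀ p) := h
                  rw [G.d_unit _ e₁.2.1, pairArr_r] at h'
                  apply e₁.2.2
                  rw [h']
                  obtain ⟨⟨a⟩, b⟩ := p
                  cases a <;> simp [bPt]
            | inr p =>
              cases k₂ with
              | inl e₂ =>
                constructor
                · intro h; exact (Sum.inr_ne_inl h).elim
                · intro h
                  exfalso
                  have h' : G.d (pairArr G γ₀ p) = G.r (e₂ : Γ) := h
                  rw [G.r_unit _ e₂.2.1, pairArr_d] at h'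
                  apply e₂.2.2
                  rw [← h']
                  obtain ⟨a, ⟨b⟩⟩ := p
                  cases b <;> simp [bPt]
              | inr q =>
                constructor
                · intro h
                  have hbc : p.2 = q.1 := congrArg Prod.fst (Sum.inr_injective h)
                  show G.d (pairArr G γ₀ p) = G.r (pairArr G γ₀ q)
                  rw [pairArr_d, pairArr_r, hbc]
                · intro h
                  have h' : G.d (pairArr G γ₀ p) = G.r (pairArr G γ₀ q) := h
                  rw [pairArr_d, pairArr_r] at h'
                  have hbc := bPt_inj huv h'
                  have h2 : (p.2, p.2) = (q.1, q.1) := by rw [hbc]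
                  exact congrArg Sum.inr h2
          · intro k₁ k₂ h
            cases k₁ with
            | inl e₁ =>
              cases k₂ with
              | inl e₂ =>
                have h'' : e₁ = e₂ := Sum.inl_injective h
                show (e₂ : Γ) = G.mul e₁.1 e₂.1
                rw [h'']
                exact (G.mulE e₂.2.1).symm
              | inr p => exact (Sum.inl_ne_inr h).elim
            | inr p =>
              cases k₂ with
              | inl e₂ => exact (Sum.inr_ne_inl h).elim
              | inr q =>
                obtain ⟨a, b⟩ := p
                obtain ⟨c, d⟩ := q
                have hbc : b = c := congrArg Prod.fst (Sum.inr_injective h)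
                subst hbc
                exact (pairArr_mul a b d).symm
          · intro γ
            constructor
            · rintro ⟨k, hk, rfl⟩
              cases k with
              | inl e => exact e.2.1
              | inr p =>
                obtain ⟨a, b⟩ := p
                have hk' : a = b := hk
                subst hk'
                show pairArr G γ₀ (a, a) ∈ G.E
                rw [pairArr_diag]
                exact bPt_mem a
            · intro hγ
              by_cases h1 : γ = G.r γ₀
              · exact ⟨Sum.inr (⟨true⟩, ⟨true⟩), rfl, h1⟩
              · by_cases h2 : γ = G.d γ₀
                · exact ⟨Sum.inr (⟨false⟩, ⟨false⟩), rfl, h2⟩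
                · refine ⟨Sum.inl ⟨γ, hγ, ?_⟩, by trivial, rfl⟩
                  intro hm
                  rcases hm with hm | hm
                  · exact h1 hm
                  · exact h2 hm
        have hZ2 : IsZMorphism GK G (fun γ k => γ = F₂ k) := by
          apply graphZ
          · intro k
            cases k with
            | inl e => exact (G.invE e.2.1).symm
            | inr p => exact (pairArr_inv (bNeg p.1, bNeg p.2)).symm
          · intro k₁ k₂
            cases k₁ with
            | inl e₁ =>
              cases k₂ with
              | inl e₂ =>
                constructor
                · intro h
                  have h'' : e₁ = e₂ := Sum.inl_injective h
                  show G.d (e₁ : Γ) = G.r (e₂ : Γ)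
                  rw [h'', G.d_unit _ e₂.2.1, G.r_unit _ e₂.2.1]
                · intro h
                  have h' : G.d (e₁ : Γ) = G.r (e₂ : Γ) := h
                  rw [G.d_unit _ e₁.2.1, G.r_unit _ e₂.2.1] at h'
                  exact congrArg Sum.inl (Subtype.ext h')
              | inr p =>
                constructor
                · intro h; exact (Sum.inl_ne_inr h).elim
                · intro h
                  exfalso
                  have h' : G.d (e₁ : Γ) = G.r (pairArr G γ₀ (bNeg p.1, bNeg p.2)) := h
                  rw [G.d_unit _ e₁.2.1, pairArr_r] at h'
                  apply e₁.2.2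
                  rw [h']
                  obtain ⟨⟨a⟩, b⟩ := p
                  cases a <;> simp [bPt, bNeg]
            | inr p =>
              cases k₂ with
              | inl e₂ =>
                constructor
                · intro h; exact (Sum.inr_ne_inl h).elim
                · intro h
                  exfalso
                  have h' : G.d (pairArr G γ₀ (bNeg p.1, bNeg p.2)) = G.r (e₂ : Γ) := h
                  rw [G.r_unit _ e₂.2.1, pairArr_d] at h'
                  apply e₂.2.2
                  rw [← h']
                  obtain ⟨a, ⟨b⟩⟩ := p
                  cases b <;> simp [bPt, bNeg]
              | inr q =>
                constructor
                · intro h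
                  have hbc : p.2 = q.1 := congrArg Prod.fst (Sum.inr_injective h)
                  show G.d (pairArr G γ₀ (bNeg p.1, bNeg p.2)) =
                    G.r (pairArr G γ₀ (bNeg q.1, bNeg q.2))
                  rw [pairArr_d, pairArr_r, hbc]
                · intro h
                  have h' : G.d (pairArr G γ₀ (bNeg p.1, bNeg p.2)) =
                    G.r (pairArr G γ₀ (bNeg q.1, bNeg q.2)) := h
                  rw [pairArr_d, pairArr_r] at h'
                  have hbc := bNeg_inj (bPt_inj huv h')
                  have h2 : (p.2, p.2) = (q.1, q.1) := by rw [hbc]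
                  exact congrArg Sum.inr h2
          · intro k₁ k₂ h
            cases k₁ with
            | inl e₁ =>
              cases k₂ with
              | inl e₂ =>
                have h'' : e₁ = e₂ := Sum.inl_injective h
                show (e₂ : Γ) = G.mul e₁.1 e₂.1
                rw [h'']
                exact (G.mulE e₂.2.1).symm
              | inr p => exact (Sum.inl_ne_inr h).elim
            | inr p =>
              cases k₂ with
              | inl e₂ => exact (Sum.inr_ne_inl h).elim
              | inr q =>
                obtain ⟨a, b⟩ := p
                obtain ⟨c, d⟩ := q
                have hbc : b = c := congrArg Prod.fst (Sum.inr_injective h)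
                subst hbc
                exact (pairArr_mul (bNeg a) (bNeg b) (bNeg d)).symm
          · intro γ
            constructor
            · rintro ⟨k, hk, rfl⟩
              cases k with
              | inl e => exact e.2.1
              | inr p =>
                obtain ⟨a, b⟩ := p
                have hk' : a = b := hk
                subst hk'
                show pairArr G γ₀ (bNeg a, bNeg a) ∈ G.E
                rw [pairArr_diag]
                exact bPt_mem (bNeg a)
            · intro hγ
              by_cases h1 : γ = G.r γ₀
              · exact ⟨Sum.inr (⟨false⟩, ⟨false⟩), rfl, h1⟩
              · by_cases h2 : γ = G.d γ₀
                · exact ⟨Sum.inr (⟨true⟩, ⟨true⟩), rfl, h2⟩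
                · refine ⟨Sum.inl ⟨γ, hγ, ?_⟩, by trivial, rfl⟩
                  intro hm
                  rcases hm with hm | hm
                  · exact h1 hm
                  · exact h2 hm
        have hcompeq : RelComp φ (fun γ k => γ = F₁ k) =
            RelComp φ (fun γ k => γ = F₂ k) := by
          funext δ k
          apply propext
          simp only [RelComp]
          constructor
          · rintro ⟨γ, hφγ, rfl⟩
            cases k with
            | inl e => exact ⟨_, hφγ, rfl⟩
            | inr p =>
              obtain ⟨⟨a⟩, ⟨b⟩⟩ := p
              cases a <;> cases b
              · exact ⟨G.r γ₀, (hA δ).mpr hφγ, rfl⟩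
              · exact ⟨γ₀, (hB δ).mpr hφγ, rfl⟩
              · exact ⟨G.inv γ₀, (hB δ).mp hφγ, rfl⟩
              · exact ⟨G.d γ₀, (hA δ).mp hφγ, rfl⟩
          · rintro ⟨γ, hφγ, rfl⟩
            cases k with
            | inl e => exact ⟨_, hφγ, rfl⟩
            | inr p =>
              obtain ⟨⟨a⟩, ⟨b⟩⟩ := p
              cases a <;> cases b
              · exact ⟨G.d γ₀, (hA δ).mp hφγ, rfl⟩
              · exact ⟨G.inv γ₀, (hB δ).mp hφγ, rfl⟩
              · exact ⟨γ₀, (hB δ).mpr hφγ, rfl⟩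
              · exact ⟨G.r γ₀, (hA δ).mpr hφγ, rfl⟩
        have hpsi := hmono _ GK _ _ hZ1 hZ2 hcompeq
        have hev := congrFun (congrFun hpsi (G.r γ₀))
          (Sum.inr ((⟨true⟩ : ULift.{u} Bool), (⟨true⟩ : ULift.{u} Bool)))
        exact huv (Eq.mp hev rfl)
    · -- G.E ⊆ kerSet
      intro e₀ he₀
      by_contra hmem
      have hforall : ∀ δ, φ δ e₀ → δ ∈ D.E := fun δ h => zUnitFwd hφ h he₀
      have hnodom : ¬ ∃ δ, φ δ e₀ := fun hd => hmem ⟨hd, hforall⟩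
      set f₁ : Γ → ULift.{u} Bool := fun _ => ⟨false⟩ with hf₁
      set f₂ : Γ → ULift.{u} Bool := fun γ => if γ = e₀ then ⟨true⟩ else ⟨false⟩ with hf₂
      have hcompeq : RelComp φ (fun γ k => γ ∈ G.E ∧ f₁ γ = k) =
          RelComp φ (fun γ k => γ ∈ G.E ∧ f₂ γ = k) := by
        funext δ k
        apply propext
        simp only [RelComp]
        constructor
        · rintro ⟨γ, hφγ, hE, hf⟩
          have hne : γ ≠ e₀ := fun hh => hnodom ⟨δ, hh ▸ hφγ⟩
          refine ⟨γ, hφγ, hE, ?_⟩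
          show (if γ = e₀ then (⟨true⟩ : ULift Bool) else ⟨false⟩) = k
          rw [if_neg hne]; exact hf
        · rintro ⟨γ, hφγ, hE, hf⟩
          have hne : γ ≠ e₀ := fun hh => hnodom ⟨δ, hh ▸ hφγ⟩
          refine ⟨γ, hφγ, hE, ?_⟩
          rw [← hf]
          show (⟨false⟩ : ULift Bool) = if γ = e₀ then (⟨true⟩ : ULift Bool) else ⟨false⟩
          rw [if_neg hne]
      have hpsi := hmono (ULift.{u} Bool) (discreteGpd _) _ _
        (indicatorZ G f₁) (indicatorZ G f₂) hcompeq
      have hev := congrFun (congrFun hpsi e₀) (⟨true⟩ : ULift Bool)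
      have h2 : e₀ ∈ G.E ∧ f₂ e₀ = ⟨true⟩ := ⟨he₀, by rw [hf₂]; simp⟩
      have h1 : e₀ ∈ G.E ∧ f₁ e₀ = ⟨true⟩ := Eq.mpr hev h2
      have := h1.2
      rw [hf₁] at this
      simpa using congrArg ULift.down this
  · -- kernel is the unit space → mono
    intro hker K GK ψ₁ ψ₂ hψ₁ hψ₂ hcomp
    funext γ k
    exact propext ⟨fun h => zCancel hφ hker hψ₁ hψ₂ hcomp h,
      fun h => zCancel hφ hker hψ₂ hψ₁ hcomp.symm h⟩
end

section
/- Every epimorphism h : Γ ⇀ Δ in the category of groupoids with Zakrzewski morphisms is surjective, i.e., Im(h) = Δ. Equivalently: if Γ₁ is a wide subgroupoid of a groupoid Γ with Γ₁ ≠ Γ, then there exist a groupoid Γ₂ and Zakrzewski morphisms h₁ ≠ h₂ : Γ ⇀ Γ₂ which coincide on Γ₁. -/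
------------------------------------------------------------------
-- auxiliary development
------------------------------------------------------------------
section ZkAux

variable {Δ : Type*} (D : Gpd Δ) (A : Set Δ)

/-- coset relation: `y = x·a` for some `a ∈ A`. -/
def zkR : Δ → Δ → Prop := fun x y => ∃ a ∈ A, D.d x = D.r a ∧ y = D.mul x a

lemma zk_equiv (hW : D.E ⊆ A) (hS : IsSubgroupoid D A) : Equivalence (zkR D A) := by
  constructor
  · intro x
    exact ⟨D.d x, hW (D.d_mem x), (D.r_unit _ (D.d_mem x)).symm, (D.mul_unit x).symm⟩
  · rintro x y ⟨a, ha, hd, rfl⟩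
    refine ⟨D.inv a, hS.1 a ha, ?_, ?_⟩
    · rw [D.mul_d hd, D.r_inv]
    · rw [D.mul_assoc hd (D.r_inv a).symm, D.mul_inv, ← hd, D.mul_unit]
  · rintro x y z ⟨a, ha, hd1, rfl⟩ ⟨b, hb, hd2, rfl⟩
    rw [D.mul_d hd1] at hd2
    refine ⟨D.mul a b, hS.2 a b ha hb hd2, ?_, ?_⟩
    · rw [D.mul_r hd2]; exact hd1
    · exact D.mul_assoc hd1 hd2

lemma zk_eq_iff (hW : D.E ⊆ A) (hS : IsSubgroupoid D A) {x y : Δ} :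
    Quot.mk (zkR D A) x = Quot.mk (zkR D A) y ↔ zkR D A x y :=
  ⟨fun h => ((zk_equiv D A hW hS).eqvGen_iff).mp (Quot.eqvGen_exact h), Quot.sound⟩

/-- anchor of a coset class. -/
def zkRho : Quot (zkR D A) → Δ :=
  Quot.lift D.r (by rintro x y ⟨a, ha, hd, rfl⟩; exact (D.mul_r hd).symm)

@[simp] lemma zkRho_mk (x : Δ) : zkRho D A (Quot.mk (zkR D A) x) = D.r x := rfl

/-- unit classes. -/
def zkUC (c : Quot (zkR D A)) : Prop := ∃ e ∈ D.E, c = Quot.mk (zkR D A) e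

lemma zk_mem_of_unit (hW : D.E ⊆ A) (hS : IsSubgroupoid D A) {e x : Δ} (he : e ∈ D.E)
    (h : Quot.mk (zkR D A) e = Quot.mk (zkR D A) x) : x ∈ A ∧ D.r x = e := by
  obtain ⟨a, ha, hd, rfl⟩ := (zk_eq_iff D A hW hS).mp h
  rw [D.d_unit e he] at hd
  have hme : D.mul e a = a := by rw [hd]; exact D.unit_mul a
  rw [hme]
  exact ⟨ha, hd.symm⟩

lemma zk_mk_r_of_mem (hS : IsSubgroupoid D A) {x : Δ} (hx : x ∈ A) :
    Quot.mk (zkR D A) x = Quot.mk (zkR D A) (D.r x) :=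
  Quot.sound ⟨D.inv x, hS.1 x hx, (D.r_inv x).symm, (D.mul_inv x).symm⟩

lemma zk_uc_iff_memA (hW : D.E ⊆ A) (hS : IsSubgroupoid D A) (x : Δ) : zkUC D A (Quot.mk (zkR D A) x) ↔ x ∈ A := by
  constructor
  · rintro ⟨e, he, hq⟩
    exact (zk_mem_of_unit D A hW hS he hq.symm).1
  · intro hx
    exact ⟨D.r x, D.r_mem x, zk_mk_r_of_mem D A hS hx⟩

lemma zk_uc_val (s : {c : Quot (zkR D A) // zkUC D A c}) :
    s.val = Quot.mk (zkR D A) (zkRho D A s.val) ∧ zkRho D A s.val ∈ D.E := by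
  obtain ⟨e, he, hv⟩ := s.2
  rw [hv]
  show Quot.mk _ e = Quot.mk _ (D.r e) ∧ D.r e ∈ D.E
  rw [D.r_unit e he]
  exact ⟨rfl, he⟩

/-- carrier: cosets plus a twin copy of the unit classes. -/
def zkY := Quot (zkR D A) ⊕ {c : Quot (zkR D A) // zkUC D A c}

open Classical in
/-- the involution swapping unit classes with their twins. -/
noncomputable def zkTau : zkY D A → zkY D A
  | .inl c => if h : zkUC D A c then .inr ⟨c, h⟩ else .inl c
  | .inr s => .inl s.val

lemma zkTau_invol (y : zkY D A) : zkTau D A (zkTau D A y) = y := by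
  cases y with
  | inl c =>
    by_cases h : zkUC D A c <;> simp [zkTau, h] <;> rfl
  | inr s => simp [zkTau, s.2] <;> rfl

/-- the twin point over the unit `r δ`. -/
def zkInf (δ : Δ) : zkY D A := Sum.inr ⟨Quot.mk _ (D.r δ), ⟨D.r δ, D.r_mem δ, rfl⟩⟩

lemma zkInf_eq {δ δ' : Δ} (h : D.r δ = D.r δ') : zkInf D A δ = zkInf D A δ' := by
  unfold zkInf
  congr 1
  exact Subtype.ext (congrArg (fun t => Quot.mk (zkR D A) t) h)

lemma zk_inr_eq (s : {c : Quot (zkR D A) // zkUC D A c}) (δ : Δ)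
    (h : zkRho D A s.val = D.r δ) : (Sum.inr s : zkY D A) = zkInf D A δ := by
  unfold zkInf
  congr 1
  refine Subtype.ext ?_
  rw [(zk_uc_val D A s).1, h]

/-- the action morphism. -/
def zkH1 : zkY D A × zkY D A → Δ → Prop := fun p δ =>
  (∃ x, p.2 = Sum.inl (Quot.mk (zkR D A) x) ∧ D.r x = D.d δ ∧
      p.1 = Sum.inl (Quot.mk (zkR D A) (D.mul δ x))) ∨
  (∃ s, p.2 = Sum.inr s ∧ zkRho D A s.val = D.d δ ∧ p.1 = zkInf D A δ)

/-- its `τ`-conjugate. -/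
noncomputable def zkH2 : zkY D A × zkY D A → Δ → Prop := fun p δ =>
  zkH1 D A (zkTau D A p.1, zkTau D A p.2) δ

end ZkAux

section ZkAux2

/-- sufficiency criterion for Z-morphisms into a pair groupoid. -/
lemma isZ_pair_of {Δ' Y' : Type*} (D : Gpd Δ') (h : Y' × Y' → Δ' → Prop)
    (hm : ∀ p (δ₁ δ₂ : Δ'), (D.d δ₁ = D.r δ₂ ∧ h p (D.mul δ₁ δ₂)) ↔
      ∃ y, h (p.1, y) δ₁ ∧ h (y, p.2) δ₂)
    (hs : ∀ p δ, h p (D.inv δ) ↔ h (p.2, p.1) δ)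
    (he : ∀ p, (∃ δ ∈ D.E, h p δ) ↔ p.1 = p.2) :
    IsZMorphism D (pairGpd Y') h := by
  refine ⟨?_, ?_, ?_⟩
  · funext p q
    apply propext
    constructor
    · rintro ⟨δ, hpδ, hc, rfl⟩
      obtain ⟨y, hy1, hy2⟩ := (hm p q.1 q.2).mp ⟨hc, hpδ⟩
      exact ⟨((p.1, y), (y, p.2)), ⟨rfl, rfl⟩, hy1, hy2⟩
    · rintro ⟨⟨⟨a, b⟩, ⟨c, d'⟩⟩, ⟨hbc, hp⟩, hh1, hh2⟩
      have hb : b = c := congrArg Prod.fst hbc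
      subst hb
      obtain ⟨hc', hmm⟩ := (hm (a, d') q.1 q.2).mpr ⟨b, hh1, hh2⟩
      exact ⟨D.mul q.1 q.2, hp ▸ hmm, hc', rfl⟩
  · funext p δ
    apply propext
    constructor
    · rintro ⟨δ', hpδ, rfl⟩
      exact ⟨(p.2, p.1), rfl, (hs p δ).mp hpδ⟩
    · rintro ⟨⟨u, v⟩, hpv, hpδ⟩
      refine ⟨D.inv δ, ?_, rfl⟩
      have : p = (v, u) := hpv
      rw [this]
      exact (hs (v, u) δ).mpr hpδ
  · funext p u
    apply propext
    constructor
    · rintro ⟨δ, hpδ, hδ⟩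
      exact (he p).mp ⟨δ, hδ, hpδ⟩
    · intro hp
      obtain ⟨δ, hδ, hpδ⟩ := (he p).mpr hp
      exact ⟨δ, hpδ, hδ⟩

variable {Δ : Type*} (D : Gpd Δ) (A : Set Δ)

lemma zkH1_m (hW : D.E ⊆ A) (hS : IsSubgroupoid D A) :
    ∀ p (δ₁ δ₂ : Δ), (D.d δ₁ = D.r δ₂ ∧ zkH1 D A p (D.mul δ₁ δ₂)) ↔
      ∃ y, zkH1 D A (p.1, y) δ₁ ∧ zkH1 D A (y, p.2) δ₂ := by
  intro p δ₁ δ₂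
  constructor
  · rintro ⟨hc, h12⟩
    rcases h12 with ⟨x, hp2, hrx, hp1⟩ | ⟨s, hp2, hrs, hp1⟩
    · rw [D.mul_d hc] at hrx
      refine ⟨Sum.inl (Quot.mk _ (D.mul δ₂ x)), Or.inl ⟨D.mul δ₂ x, rfl, ?_, ?_⟩,
        Or.inl ⟨x, hp2, hrx, rfl⟩⟩
      · rw [D.mul_r hrx.symm]; exact hc.symm
      · rw [hp1, D.mul_assoc hc hrx.symm]
    · rw [D.mul_d hc] at hrs
      refine ⟨zkInf D A δ₂, Or.inr ⟨_, rfl, ?_, ?_⟩, Or.inr ⟨s, hp2, hrs, rfl⟩⟩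
      · show zkRho D A (Quot.mk _ (D.r δ₂)) = D.d δ₁
        rw [zkRho_mk, D.r_unit _ (D.r_mem δ₂)]; exact hc.symm
      · rw [hp1]
        exact zkInf_eq D A (D.mul_r hc)
  · rintro ⟨y, hy1, hy2⟩
    rcases hy2 with ⟨x, hp2, hrx, hyx⟩ | ⟨s, hp2, hrs, hy⟩
    · rcases hy1 with ⟨x', hyx', hrx', hp1⟩ | ⟨s', hys', _, _⟩
      · dsimp only at hp2 hyx hyx' hp1
        rw [hyx] at hyx'
        have hq : Quot.mk (zkR D A) (D.mul δ₂ x) = Quot.mk (zkR D A) x' :=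
          Sum.inl.injEq _ _ ▸ hyx'
        obtain ⟨a, ha, hda, hx'⟩ := (zk_eq_iff D A hW hS).mp hq
        have hrx'' : D.r x' = D.r δ₂ := by rw [hx', D.mul_r hda, D.mul_r hrx.symm]
        have hc : D.d δ₁ = D.r δ₂ := by rw [← hrx'', hrx']
        refine ⟨hc, Or.inl ⟨x, hp2, ?_, ?_⟩⟩
        · rw [hrx, D.mul_d hc]
        · rw [hp1, hx']
          have e1 : D.mul δ₁ (D.mul (D.mul δ₂ x) a) = D.mul (D.mul δ₁ (D.mul δ₂ x)) a :=
            (D.mul_assoc (by rw [D.mul_r hrx.symm]; exact hc) hda).symm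
          have e2 : D.mul δ₁ (D.mul δ₂ x) = D.mul (D.mul δ₁ δ₂) x :=
            (D.mul_assoc hc hrx.symm).symm
          rw [e1, e2]
          have : zkR D A (D.mul (D.mul δ₁ δ₂) x) (D.mul (D.mul (D.mul δ₁ δ₂) x) a) := by
            refine ⟨a, ha, ?_, rfl⟩
            rw [D.mul_d (by rw [D.mul_d hc]; exact hrx.symm), ← hda,
              D.mul_d hrx.symm]
          exact congrArg Sum.inl (Quot.sound this).symm
      · dsimp only at hyx hys'
        rw [hyx] at hys'; exact absurd hys' (by simp)
    · rcases hy1 with ⟨x', hyx', _, _⟩ | ⟨s', hys', hrs', hp1⟩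
      · dsimp only at hy hyx'
        rw [hy] at hyx'; exact absurd hyx' (by simp [zkInf])
      · dsimp only at hp2 hy hys' hp1
        rw [hy] at hys'
        have hs' : s' = ⟨Quot.mk _ (D.r δ₂), ⟨D.r δ₂, D.r_mem δ₂, rfl⟩⟩ :=
          (Sum.inr.injEq _ _ ▸ hys').symm
        rw [hs'] at hrs'
        have hc : D.d δ₁ = D.r δ₂ := by
          rw [← hrs']
          show D.r (D.r δ₂) = _
          rw [D.r_unit _ (D.r_mem δ₂)]
        refine ⟨hc, Or.inr ⟨s, hp2, ?_, ?_⟩⟩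
        · rw [hrs, D.mul_d hc]
        · rw [hp1]
          exact zkInf_eq D A (D.mul_r hc).symm

end ZkAux2

section ZkAux3

variable {Δ : Type*} (D : Gpd Δ) (A : Set Δ)

lemma zkH1_s_aux (hW : D.E ⊆ A) (hS : IsSubgroupoid D A) :
    ∀ p δ, zkH1 D A p (D.inv δ) → zkH1 D A (p.2, p.1) δ := by
  rintro p δ (⟨x, hp2, hrx, hp1⟩ | ⟨s, hp2, hrs, hp1⟩)
  · rw [D.d_inv] at hrx
    refine Or.inl ⟨D.mul (D.inv δ) x, hp1, ?_, ?_⟩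
    · rw [D.mul_r (by rw [D.d_inv]; exact hrx.symm), D.r_inv]
    · dsimp only
      rw [hp2]
      have e1 : D.mul δ (D.mul (D.inv δ) x) = D.mul (D.mul δ (D.inv δ)) x :=
        (D.mul_assoc (D.r_inv δ).symm (by rw [D.d_inv]; exact hrx.symm)).symm
      rw [e1, D.mul_inv, ← hrx, D.unit_mul]
  · rw [D.d_inv] at hrs
    refine Or.inr ⟨⟨Quot.mk _ (D.r (D.inv δ)), ⟨_, D.r_mem _, rfl⟩⟩, hp1, ?_, ?_⟩
    · show zkRho D A (Quot.mk _ (D.r (D.inv δ))) = D.d δ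
      rw [zkRho_mk, D.r_unit _ (D.r_mem _), D.r_inv]
    · dsimp only
      rw [hp2]
      exact zk_inr_eq D A s δ hrs

lemma zkH1_s (hW : D.E ⊆ A) (hS : IsSubgroupoid D A) :
    ∀ p δ, zkH1 D A p (D.inv δ) ↔ zkH1 D A (p.2, p.1) δ := by
  intro p δ
  constructor
  · exact zkH1_s_aux D A hW hS p δ
  · intro hh
    have := zkH1_s_aux D A hW hS (p.2, p.1) (D.inv δ) (by rw [D.inv_inv]; exact hh)
    exact this

lemma zkH1_e (hW : D.E ⊆ A) (hS : IsSubgroupoid D A) :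
    ∀ p, (∃ δ ∈ D.E, zkH1 D A p δ) ↔ p.1 = p.2 := by
  intro p
  constructor
  · rintro ⟨e, he, ⟨x, hp2, hrx, hp1⟩ | ⟨s, hp2, hrs, hp1⟩⟩
    · rw [D.d_unit e he] at hrx
      rw [hp1, hp2, ← hrx, D.unit_mul]
    · rw [D.d_unit e he] at hrs
      rw [hp1, hp2]
      exact (zk_inr_eq D A s e (by rw [hrs, D.r_unit e he])).symm
  · intro hp
    rcases hq : p.2 with c | s
    · obtain ⟨x, rfl⟩ := Quot.exists_rep c
      refine ⟨D.r x, D.r_mem x, Or.inl ⟨x, hq, ?_, ?_⟩⟩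
      · rw [D.d_unit _ (D.r_mem x)]
      · rw [hp, hq, D.unit_mul]
    · obtain ⟨hval, hmem⟩ := zk_uc_val D A s
      refine ⟨zkRho D A s.val, hmem, Or.inr ⟨s, hq, D.d_unit _ hmem |>.symm ▸ rfl, ?_⟩⟩
      rw [hp, hq]
      exact zk_inr_eq D A s (zkRho D A s.val) (by rw [D.r_unit _ hmem])

lemma zkH1_isZ (hW : D.E ⊆ A) (hS : IsSubgroupoid D A) :
    IsZMorphism D (pairGpd (zkY D A)) (zkH1 D A) :=
  isZ_pair_of D _ (zkH1_m D A hW hS) (zkH1_s D A hW hS) (zkH1_e D A hW hS)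

lemma zkH2_isZ (hW : D.E ⊆ A) (hS : IsSubgroupoid D A) :
    IsZMorphism D (pairGpd (zkY D A)) (zkH2 D A) := by
  apply isZ_pair_of
  · intro p δ₁ δ₂
    unfold zkH2
    rw [zkH1_m D A hW hS (zkTau D A p.1, zkTau D A p.2) δ₁ δ₂]
    constructor
    · rintro ⟨y, hy1, hy2⟩
      refine ⟨zkTau D A y, ?_, ?_⟩ <;> dsimp only <;>
        rw [zkTau_invol] <;> assumption
    · rintro ⟨y, hy1, hy2⟩
      exact ⟨zkTau D A y, hy1, hy2⟩
  · intro p δ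
    exact zkH1_s D A hW hS (zkTau D A p.1, zkTau D A p.2) δ
  · intro p
    unfold zkH2
    rw [zkH1_e D A hW hS (zkTau D A p.1, zkTau D A p.2)]
    dsimp only
    constructor
    · intro hττ
      have := congrArg (zkTau D A) hττ
      rwa [zkTau_invol, zkTau_invol] at this
    · intro hp; rw [hp]

end ZkAux3

section ZkAux4

variable {Δ : Type*} (D : Gpd Δ) (A : Set Δ)

lemma zkTau_inl_pos {c} (h : zkUC D A c) :
    zkTau D A (Sum.inl c) = Sum.inr ⟨c, h⟩ := by simp [zkTau, h] <;> rfl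

lemma zkTau_inl_neg {c} (h : ¬ zkUC D A c) :
    zkTau D A (Sum.inl c) = Sum.inl c := by simp [zkTau, h] <;> rfl

lemma zkTau_inr (s) : zkTau D A (Sum.inr s) = Sum.inl s.val := rfl

lemma zk_agree_aux (hW : D.E ⊆ A) (hS : IsSubgroupoid D A) {a : Δ} (ha : a ∈ A) :
    ∀ p, zkH1 D A p a → zkH1 D A (zkTau D A p.1, zkTau D A p.2) a := by
  rintro p (⟨x, hp2, hrx, hp1⟩ | ⟨s, hp2, hrs, hp1⟩)
  · by_cases hx : x ∈ A
    · have hax : D.mul a x ∈ A := hS.2 a x ha hx hrx.symm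
      refine Or.inr ⟨⟨Quot.mk _ x, (zk_uc_iff_memA D A hW hS x).mpr hx⟩, ?_, ?_, ?_⟩
      · dsimp only
        rw [hp2, zkTau_inl_pos]
      · rw [zkRho_mk]; exact hrx
      · dsimp only
        rw [hp1, zkTau_inl_pos D A ((zk_uc_iff_memA D A hW hS _).mpr hax)]
        refine zk_inr_eq D A _ a ?_
        rw [zkRho_mk, D.mul_r hrx.symm]
    · have hnax : D.mul a x ∉ A := by
        intro h'
        apply hx
        have hmem := hS.2 (D.inv a) (D.mul a x) (hS.1 a ha) h'
          (by rw [D.d_inv, D.mul_r hrx.symm])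
        have e1 : D.mul (D.inv a) (D.mul a x) = D.mul (D.mul (D.inv a) a) x :=
          (D.mul_assoc (D.d_inv a) hrx.symm).symm
        rwa [e1, D.inv_mul, ← hrx, D.unit_mul] at hmem
      refine Or.inl ⟨x, ?_, hrx, ?_⟩
      · dsimp only
        rw [hp2, zkTau_inl_neg D A (fun hu => hx ((zk_uc_iff_memA D A hW hS x).mp hu))]
      · dsimp only
        rw [hp1, zkTau_inl_neg D A (fun hu => hnax ((zk_uc_iff_memA D A hW hS _).mp hu))]
  · refine Or.inl ⟨D.d a, ?_, D.r_unit _ (D.d_mem a), ?_⟩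
    · dsimp only
      rw [hp2, zkTau_inr]
      have := (zk_uc_val D A s).1
      rw [this, hrs]
    · dsimp only
      rw [hp1]
      show zkTau D A (Sum.inr _) = _
      rw [zkTau_inr]
      show Sum.inl (Quot.mk _ (D.r a)) = _
      rw [← zk_mk_r_of_mem D A hS ha, D.mul_unit]

lemma zk_agree (hW : D.E ⊆ A) (hS : IsSubgroupoid D A) {a : Δ} (ha : a ∈ A) (p) :
    zkH1 D A p a ↔ zkH2 D A p a := by
  constructor
  · exact zk_agree_aux D A hW hS ha p
  · intro hh
    have := zk_agree_aux D A hW hS ha (zkTau D A p.1, zkTau D A p.2) hh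
    dsimp only at this
    rwa [zkTau_invol, zkTau_invol] at this

lemma zk_diff (hW : D.E ⊆ A) (hS : IsSubgroupoid D A) {δ₀ : Δ} (hδ₀ : δ₀ ∉ A) :
    zkH1 D A (zkInf D A δ₀, zkInf D A (D.inv δ₀)) δ₀ ∧
    ¬ zkH2 D A (zkInf D A δ₀, zkInf D A (D.inv δ₀)) δ₀ := by
  constructor
  · refine Or.inr ⟨_, rfl, ?_, rfl⟩
    rw [zkRho_mk, D.r_unit _ (D.r_mem _), D.r_inv]
  · intro hcon
    have hcon' : zkH1 D A
        (Sum.inl (Quot.mk _ (D.r δ₀)), Sum.inl (Quot.mk _ (D.r (D.inv δ₀)))) δ₀ := hcon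
    rcases hcon' with ⟨x, h2, hrx, h1⟩ | ⟨s, h2, _, _⟩
    · dsimp only at h1 h2
      have hq2 : Quot.mk (zkR D A) (D.r (D.inv δ₀)) = Quot.mk (zkR D A) x :=
        Sum.inl.inj h2
      obtain ⟨hx1, hx2⟩ := zk_mem_of_unit D A hW hS (D.r_mem _) hq2
      have hdx : D.d δ₀ = D.r x := by rw [hx2, D.r_inv]
      have hq1 : Quot.mk (zkR D A) (D.r δ₀) = Quot.mk (zkR D A) (D.mul δ₀ x) :=
        Sum.inl.inj h1
      obtain ⟨hm1, _⟩ := zk_mem_of_unit D A hW hS (D.r_mem _) hq1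
      have hb : D.d (D.mul δ₀ x) = D.r (D.inv x) := by
        rw [D.mul_d hdx, D.r_inv]
      have hmem : D.mul (D.mul δ₀ x) (D.inv x) ∈ A := hS.2 _ _ hm1 (hS.1 x hx1) hb
      have e1 : D.mul (D.mul δ₀ x) (D.inv x) = δ₀ := by
        rw [D.mul_assoc hdx (D.r_inv x).symm, D.mul_inv, ← hdx, D.mul_unit]
      exact hδ₀ (e1 ▸ hmem)
    · exact absurd h2 (by simp)

end ZkAux4

/-- Every epimorphism (right-cancellable Zakrzewski morphism) of groupoids is
surjective: its image is the whole target. -/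
theorem stmt_14 {Γ Δ : Type u} (G : Gpd Γ) (D : Gpd Δ) (h : Δ → Γ → Prop)
    (hh : IsZMorphism G D h)
    (hepi : ∀ (L : Type u) (HL : Gpd L) (h₁ h₂ : L → Δ → Prop),
      IsZMorphism D HL h₁ → IsZMorphism D HL h₂ →
      RelComp h₁ h = RelComp h₂ h → h₁ = h₂) :
    ∀ δ : Δ, ∃ γ : Γ, h δ γ := by
  set A : Set Δ := {δ | ∃ γ, h δ γ} with hA
  have hW : D.E ⊆ A := by
    intro e he
    have h1 := congrFun (congrFun hh.2.2 e) ()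
    have h2 : RelComp h (eRel G) e () := by rw [h1]; exact he
    obtain ⟨γ, hγ, _⟩ := h2
    exact ⟨γ, hγ⟩
  have hS : IsSubgroupoid D A := by
    constructor
    · rintro δ ⟨γ, hγ⟩
      have h1 := congrFun (congrFun hh.2.1 (D.inv δ)) γ
      have h2 : RelComp (sRel D) h (D.inv δ) γ := ⟨δ, rfl, hγ⟩
      rw [← h1] at h2
      obtain ⟨γ', hγ', hγ''⟩ := h2
      exact ⟨γ', hγ'⟩
    · rintro δ₁ δ₂ ⟨γ₁, h1⟩ ⟨γ₂, h2⟩ hc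
      have hm := congrFun (congrFun hh.1 (D.mul δ₁ δ₂)) (γ₁, γ₂)
      have h3 : RelComp (mRel D) (RelProd h h) (D.mul δ₁ δ₂) (γ₁, γ₂) :=
        ⟨(δ₁, δ₂), ⟨hc, rfl⟩, h1, h2⟩
      rw [← hm] at h3
      obtain ⟨γ, hγ, _⟩ := h3
      exact ⟨γ, hγ⟩
  intro δ₀
  by_contra hno
  push_neg at hno
  have hδ₀ : δ₀ ∉ A := by rintro ⟨γ, hγ⟩; exact hno γ hγ
  have heq : RelComp (zkH1 D A) h = RelComp (zkH2 D A) h := by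
    funext p γ
    apply propext
    constructor
    · rintro ⟨δ, h1, hδγ⟩
      exact ⟨δ, (zk_agree D A hW hS ⟨γ, hδγ⟩ p).mp h1, hδγ⟩
    · rintro ⟨δ, h1, hδγ⟩
      exact ⟨δ, (zk_agree D A hW hS ⟨γ, hδγ⟩ p).mpr h1, hδγ⟩
  have hres := hepi (zkY D A × zkY D A) (pairGpd (zkY D A)) (zkH1 D A) (zkH2 D A)
    (zkH1_isZ D A hW hS) (zkH2_isZ D A hW hS) heq
  obtain ⟨hd1, hd2⟩ := zk_diff D A hW hS hδ₀
  apply hd2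
  rw [← hres]
  exact hd1
end

section
/- Let h : Γ ⇀ Δ be a surjective Zakrzewski morphism and h₁, h₂ : Δ ⇀ Λ Zakrzewski morphisms with base maps ρ₁, ρ₂ : Λ^{(0)} → Δ^{(0)}. If h₁h = h₂h and ρ₁ = ρ₂, then h₁ = h₂. -/
section ZLemmas

variable {Γ Δ : Type*} {G : Gpd Γ} {D : Gpd Δ} {h : Δ → Γ → Prop}

/-- A Zakrzewski morphism is compatible with inverses. -/
lemma zmor_inv (hz : IsZMorphism G D h) {δ γ} (hd : h δ γ) :
    h (D.inv δ) (G.inv γ) := by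
  have h1 : RelComp h (sRel G) δ (G.inv γ) := ⟨γ, hd, (G.inv_inv γ).symm⟩
  rw [hz.2.1] at h1
  obtain ⟨y, hy1, hy2⟩ := h1
  have hy : y = D.inv δ := by rw [hy1, D.inv_inv]
  rwa [hy] at hy2

/-- A Zakrzewski morphism maps only units to units. -/
lemma zmor_unit (hz : IsZMorphism G D h) {δ γ} (hd : h δ γ) (hγ : γ ∈ G.E) :
    δ ∈ D.E := by
  have h1 : RelComp h (eRel G) δ () := ⟨γ, hd, hγ⟩
  rw [hz.2.2] at h1
  exact h1

/-- A Zakrzewski morphism is multiplicative. -/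
lemma zmor_mul (hz : IsZMorphism G D h) {δ₁ δ₂ γ₁ γ₂}
    (hd₁ : h δ₁ γ₁) (hd₂ : h δ₂ γ₂) (hcδ : D.d δ₁ = D.r δ₂)
    (_hcγ : G.d γ₁ = G.r γ₂) : h (D.mul δ₁ δ₂) (G.mul γ₁ γ₂) := by
  have h1 : RelComp (mRel D) (RelProd h h) (D.mul δ₁ δ₂) (γ₁, γ₂) :=
    ⟨(δ₁, δ₂), ⟨hcδ, rfl⟩, hd₁, hd₂⟩
  rw [← hz.1] at h1
  obtain ⟨y, hy1, hy2, hy3⟩ := h1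
  rwa [hy3] at hy1

/-- A Zakrzewski morphism is compatible with sources. -/
lemma zmor_d (hz : IsZMorphism G D h) {δ γ} (hd : h δ γ) :
    h (D.d δ) (G.d γ) := by
  have h1 := zmor_inv hz hd
  have h2 := zmor_mul hz h1 hd (D.d_inv δ) (G.d_inv γ)
  rwa [D.inv_mul, G.inv_mul] at h2

/-- Cancellation: two arrows with the same source related to the same arrow
coincide. -/
lemma zmor_cancel (hz : IsZMorphism G D h) {δ δ' γ} (hd : h δ γ)
    (hd' : h δ' γ) (hdd : D.d δ = D.d δ') : δ = δ' := by
  have h1 := zmor_inv hz hd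
  have hc : D.d δ' = D.r (D.inv δ) := by rw [D.r_inv, hdd]
  have hc' : G.d γ = G.r (G.inv γ) := by rw [G.r_inv]
  have h2 := zmor_mul hz hd' h1 hc hc'
  rw [G.mul_inv] at h2
  have hu : D.mul δ' (D.inv δ) ∈ D.E := zmor_unit hz h2 (G.r_mem γ)
  have hdu : D.d (D.mul δ' (D.inv δ)) = D.r δ := by rw [D.mul_d hc, D.d_inv]
  have hru : D.mul δ' (D.inv δ) = D.r δ := by
    rw [← hdu, D.d_unit _ hu]
  symm
  calc δ' = D.mul δ' (D.d δ') := (D.mul_unit δ').symm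
    _ = D.mul δ' (D.mul (D.inv δ) δ) := by rw [← hdd, ← D.inv_mul]
    _ = D.mul (D.mul δ' (D.inv δ)) δ := (D.mul_assoc hc (by rw [D.d_inv])).symm
    _ = D.mul (D.r δ) δ := by rw [hru]
    _ = δ := D.unit_mul δ

end ZLemmas

/-- If `h` is a surjective Zakrzewski morphism and `h₁, h₂` are Zakrzewski
morphisms out of its target with the same base map (expressed by: units of `Λ`
are related by `h₁` and `h₂` to the same unit of `Δ`), then `h₁h = h₂h`
implies `h₁ = h₂`. -/
theorem stmt_15 {Γ Δ Λ : Type*} (G : Gpd Γ) (D : Gpd Δ) (L : Gpd Λ)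
    (h : Δ → Γ → Prop) (hh : IsZMorphism G D h)
    (hsurj : ∀ δ : Δ, ∃ γ, h δ γ)
    (h₁ h₂ : Λ → Δ → Prop)
    (hh₁ : IsZMorphism D L h₁) (hh₂ : IsZMorphism D L h₂)
    (hbase : ∀ f ∈ L.E, ∀ e ∈ D.E, ∀ e' ∈ D.E, h₁ f e → h₂ f e' → e = e')
    (hcomp : RelComp h₁ h = RelComp h₂ h) :
    h₁ = h₂ := by
  funext lam δ
  apply propext
  constructor
  · intro h1
    obtain ⟨γ, hγ⟩ := hsurj δ
    have hc : RelComp h₁ h lam γ := ⟨δ, h1, hγ⟩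
    rw [hcomp] at hc
    obtain ⟨δ', h2, hγ'⟩ := hc
    have hdd : D.d δ = D.d δ' :=
      hbase (L.d lam) (L.d_mem lam) (D.d δ) (D.d_mem δ) (D.d δ') (D.d_mem δ')
        (zmor_d hh₁ h1) (zmor_d hh₂ h2)
    rwa [zmor_cancel hh hγ hγ' hdd]
  · intro h2
    obtain ⟨γ, hγ⟩ := hsurj δ
    have hc : RelComp h₂ h lam γ := ⟨δ, h2, hγ⟩
    rw [← hcomp] at hc
    obtain ⟨δ', h1, hγ'⟩ := hc
    have hdd : D.d δ' = D.d δ :=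
      hbase (L.d lam) (L.d_mem lam) (D.d δ') (D.d_mem δ') (D.d δ) (D.d_mem δ)
        (zmor_d hh₁ h1) (zmor_d hh₂ h2)
    rwa [← zmor_cancel hh hγ' hγ hdd]
end
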